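/- arXiv:1702.04050 — 7 statements merged into one kernel-verified Lean document; each statement's English description precedes it below -/
import Mathlib

section
/- Let ζ_1,…,ζ_n be independent non-negative random variables and B, ε_0 ≥ 0. Assume that for each k and all ε ≥ ε_0, P(ζ_k < ε) ≤ Bε. Then there is an absolute constant C such that for all ε ≥ ε_0, P(∑_{k=1}^n ζ_k² < ε²n) ≤ (CBε)^n. -/
open MeasureTheory ProbabilityTheory Real
open scoped ENNReal Classical

noncomputable section

/-- `EucSp n` is Euclidean space `ℝ^n`. -/
abbrev EucSp (n : ℕ) := EuclideanSpace ℝ (Fin n)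

/-- Matrix-vector multiplication as a map between Euclidean spaces. -/
def mulVecE {N n : ℕ} (A : Matrix (Fin N) (Fin n) ℝ) (x : EucSp n) : EucSp N := WithLp.toLp 2 (A.mulVec x)

/-- Operator norm (`ℓ² → ℓ²`) of a rectangular matrix. -/
def opNormM {N n : ℕ} (A : Matrix (Fin N) (Fin n) ℝ) : ℝ :=
  ⨆ x : Metric.sphere (0 : EucSp n) 1, ‖mulVecE A x‖

/-- The set of `δn`-sparse vectors in `ℝ^n`. -/
def sparseVecs (n : ℕ) (δ : ℝ) : Set (EucSp n) :=
  {y | (Nat.card {i : Fin n // y i ≠ 0} : ℝ) ≤ δ * n}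

/-- Compressible unit vectors: within distance `ρ` of the `δn`-sparse vectors. -/
def compVecs (n : ℕ) (δ ρ : ℝ) : Set (EucSp n) :=
  {x | ‖x‖ = 1 ∧ Metric.infDist x (sparseVecs n δ) ≤ ρ}

/-- Incompressible unit vectors. -/
def incompVecs (n : ℕ) (δ ρ : ℝ) : Set (EucSp n) :=
  {x | ‖x‖ = 1 ∧ ρ < Metric.infDist x (sparseVecs n δ)}

/-!
Chernoff's bound: by Markov's inequality and independence,
`P(∑ ζ_k² < ε² n) ≤ eⁿ ∏ E exp(-(ζ_k/ε)²)`. Each factor is `O(Bε)`: where `⌊ζ_k/ε⌋ = j` the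
integrand is at most `e^{-j}`, that event lies in `{ζ_k < ε(j+1)}` of probability at most
`Bε(j+1)`, and `∑ (j+1) e^{-j} < ∞`.
-/

theorem hasSum_succ_mul_geometric_of_norm_lt_one {r : ℝ} (hr : ‖r‖ < 1) :
    HasSum (fun n : ℕ => (n + 1) * r ^ n) (1 / (1 - r) ^ 2) := by
  have hr1 : 1 - r ≠ 0 := sub_ne_zero.mpr (ne_of_lt (lt_of_abs_lt hr)).symm
  have hsum : 1 / (1 - r) ^ 2 = r / (1 - r) ^ 2 + (1 - r)⁻¹ := by
    field_simp
    ring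
  rw [hsum]
  exact ((hasSum_coe_mul_geometric_of_norm_lt_one hr).add
    (hasSum_geometric_of_norm_lt_one hr)).congr_fun fun n => by ring

def smallBallConst : ℝ := exp 1 / (1 - exp (-1)) ^ 2

theorem exp_neg_one_lt_one : exp (-1 : ℝ) < 1 := exp_lt_one_iff.mpr (by norm_num)

theorem smallBallConst_pos : 0 < smallBallConst :=
  div_pos (exp_pos 1) (pow_pos (sub_pos.mpr exp_neg_one_lt_one) 2)

theorem exp_neg_sq_le_tsum_indicator {x : ℝ} (hx : 0 ≤ x) :
    ENNReal.ofReal (exp (-x ^ 2)) ≤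
      ∑' j : ℕ, (Set.Iio ((j : ℝ) + 1)).indicator (fun _ => ENNReal.ofReal (exp (-1) ^ j)) x := by
  set j := ⌊x⌋₊
  have hj : (j : ℝ) ≤ x := Nat.floor_le hx
  have hjx : (j : ℝ) ≤ x ^ 2 :=
    calc (j : ℝ) ≤ (j : ℝ) ^ 2 := by exact_mod_cast Nat.le_self_pow two_ne_zero j
      _ ≤ x ^ 2 := pow_le_pow_left₀ j.cast_nonneg hj 2
  refine le_trans ?_ (ENNReal.le_tsum j)
  rw [Set.indicator_of_mem (Set.mem_Iio.mpr (Nat.lt_floor_add_one x)), ← exp_nat_mul, mul_neg_one]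
  exact ENNReal.ofReal_le_ofReal (exp_le_exp.mpr (by linarith))

theorem lintegral_exp_neg_sq_le_tsum {Ω : Type*} [MeasurableSpace Ω] (μ : Measure Ω)
    {X : Ω → ℝ} (hX : Measurable X) (h0 : ∀ ω, 0 ≤ X ω) :
    ∫⁻ ω, ENNReal.ofReal (exp (-X ω ^ 2)) ∂μ ≤
      ∑' j : ℕ, ENNReal.ofReal (exp (-1) ^ j) * μ {ω | X ω < j + 1} := by
  have hmeas (j : ℕ) : MeasurableSet {ω | X ω < j + 1} := measurableSet_lt hX measurable_const
  calc ∫⁻ ω, ENNReal.ofReal (exp (-X ω ^ 2)) ∂μ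
      ≤ ∫⁻ ω, ∑' j : ℕ, {ω | X ω < j + 1}.indicator
          (fun _ => ENNReal.ofReal (exp (-1) ^ j)) ω ∂μ :=
        lintegral_mono fun ω => exp_neg_sq_le_tsum_indicator (h0 ω)
    _ = ∑' j : ℕ, ENNReal.ofReal (exp (-1) ^ j) * μ {ω | X ω < j + 1} := by
        rw [lintegral_tsum fun j => (measurable_const.indicator (hmeas j)).aemeasurable]
        simp_rw [lintegral_indicator_const (hmeas _)]

theorem integral_exp_neg_sq_div_le {Ω : Type*} [MeasurableSpace Ω] (μ : Measure Ω)
    [IsFiniteMeasure μ] {X : Ω → ℝ} (hX : Measurable X) (h0 : ∀ ω, 0 ≤ X ω) {B ε : ℝ}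
    (hB : 0 ≤ B) (hε : 0 < ε) (hsmall : ∀ s, ε ≤ s → μ.real {ω | X ω < s} ≤ B * s) :
    ∫ ω, exp (-(X ω / ε) ^ 2) ∂μ ≤ B * ε / (1 - exp (-1)) ^ 2 := by
  have hgeom := (hasSum_succ_mul_geometric_of_norm_lt_one
    ((norm_of_nonneg (exp_pos (-1)).le).trans_lt exp_neg_one_lt_one)).mul_right (B * ε)
  have hterm (j : ℕ) : μ {ω | X ω / ε < j + 1} ≤ ENNReal.ofReal (B * (ε * (j + 1))) := by
    simp_rw [div_lt_iff₀ hε, mul_comm _ ε]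
    rw [← ofReal_measureReal]
    exact ENNReal.ofReal_le_ofReal (hsmall _ (le_mul_of_one_le_right hε.le (by simp)))
  rw [integral_eq_lintegral_of_nonneg_ae (.of_forall fun ω => (exp_pos _).le)
    (by fun_prop)]
  refine ENNReal.toReal_le_of_le_ofReal (by positivity) ?_
  calc ∫⁻ ω, ENNReal.ofReal (exp (-(X ω / ε) ^ 2)) ∂μ
      ≤ ∑' j : ℕ, ENNReal.ofReal (exp (-1) ^ j) * μ {ω | X ω / ε < j + 1} :=
        lintegral_exp_neg_sq_le_tsum μ (hX.div_const ε) fun ω => div_nonneg (h0 ω) hε.le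
    _ ≤ ∑' j : ℕ, ENNReal.ofReal ((j + 1) * exp (-1) ^ j * (B * ε)) := by
        refine ENNReal.tsum_le_tsum fun j => ?_
        grw [hterm j, ← ENNReal.ofReal_mul (by positivity)]
        exact ENNReal.ofReal_le_ofReal (le_of_eq (by ring))
    _ = ENNReal.ofReal (B * ε / (1 - exp (-1)) ^ 2) := by
        rw [← ENNReal.ofReal_tsum_of_nonneg (fun j => by positivity) hgeom.summable,
          hgeom.tsum_eq]
        congr 1
        ring

theorem ProbabilityTheory.iIndepFun.measureReal_sum_le_le_exp_mul_prod_mgf {Ω ι : Type*}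
    [MeasurableSpace Ω] {μ : Measure Ω} [Fintype ι] {X : ι → Ω → ℝ} (hind : iIndepFun X μ)
    (hX : ∀ i, Measurable (X i)) (h0 : ∀ i ω, 0 ≤ X i ω) {t : ℝ} (ht : t ≤ 0) (a : ℝ) :
    μ.real {ω | ∑ i, X i ω ≤ a} ≤ exp (-t * a) * ∏ i, mgf (X i) μ t := by
  have := hind.isProbabilityMeasure
  have hint (i : ι) : Integrable (fun ω => exp (t * X i ω)) μ := by
    refine (integrable_const 1).mono' (by fun_prop) (.of_forall fun ω => ?_)
    rw [norm_of_nonneg (exp_pos _).le, exp_le_one_iff]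
    exact mul_nonpos_of_nonpos_of_nonneg ht (h0 i ω)
  calc μ.real {ω | ∑ i, X i ω ≤ a} = μ.real {ω | (∑ i, X i) ω ≤ a} := by
        simp only [Finset.sum_apply]
    _ ≤ exp (-t * a) * mgf (∑ i, X i) μ t :=
        measure_le_le_exp_mul_mgf a ht (hind.integrable_exp_mul_sum hX fun i _ => hint i)
    _ = exp (-t * a) * ∏ i, mgf (X i) μ t := by rw [hind.mgf_sum hX]

/-- Tensorization of small-ball probabilities (linear bound). -/
theorem stmt0 :
    ∃ C : ℝ, 0 < C ∧
      ∀ (Ω : Type) (_ : MeasurableSpace Ω) (μ : Measure Ω), IsProbabilityMeasure μ →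
      ∀ (n : ℕ) (ζ : Fin n → Ω → ℝ) (B ε₀ : ℝ),
        0 ≤ B → 0 ≤ ε₀ →
        (∀ k, Measurable (ζ k)) →
        iIndepFun ζ μ →
        (∀ k ω, 0 ≤ ζ k ω) →
        (∀ k ε, ε₀ ≤ ε → (μ {ω | ζ k ω < ε}).toReal ≤ B * ε) →
        ∀ ε, ε₀ ≤ ε →
          (μ {ω | ∑ k, (ζ k ω) ^ 2 < ε ^ 2 * n}).toReal ≤ (C * B * ε) ^ n := by
  refine ⟨smallBallConst, smallBallConst_pos, ?_⟩
  intro Ω _ μ _ n ζ B ε₀ hB hε₀ hmeas hind hpos hsmall ε hε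
  rcases (hε₀.trans hε).eq_or_lt with rfl | hε_pos
  · have hempty : {ω | ∑ k, ζ k ω ^ 2 < 0} = ∅ :=
      Set.eq_empty_of_forall_notMem fun ω =>
        (Finset.sum_nonneg fun k _ => sq_nonneg (ζ k ω)).not_gt
    simp [hempty]
  set Y : Fin n → Ω → ℝ := fun k ω => (ζ k ω / ε) ^ 2
  have hindY : iIndepFun Y μ := hind.comp (fun _ x => (x / ε) ^ 2) fun _ => by fun_prop
  have hY (k : Fin n) : mgf (Y k) μ (-1) ≤ B * ε / (1 - exp (-1)) ^ 2 := by
    simpa [Y, mgf] using integral_exp_neg_sq_div_le μ (hmeas k) (hpos k) hB hε_pos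
      fun s hs => hsmall k s (hε.trans hs)
  have hsub : {ω | ∑ k, ζ k ω ^ 2 < ε ^ 2 * n} ⊆ {ω | ∑ k, Y k ω ≤ n} := fun ω hω => by
    simp only [Y, div_pow, ← Finset.sum_div, Set.mem_ofPred_eq] at hω ⊢
    rw [div_le_iff₀ (by positivity)]
    linarith
  calc (μ {ω | ∑ k, ζ k ω ^ 2 < ε ^ 2 * n}).toReal
      ≤ μ.real {ω | ∑ k, Y k ω ≤ n} := measureReal_mono hsub
    _ ≤ exp (-(-1) * n) * ∏ k, mgf (Y k) μ (-1) :=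
        hindY.measureReal_sum_le_le_exp_mul_prod_mgf (fun k => by fun_prop)
          (fun k ω => sq_nonneg _) (by norm_num) n
    _ ≤ exp n * ∏ _k : Fin n, B * ε / (1 - exp (-1)) ^ 2 := by
        rw [neg_neg, one_mul]
        gcongr
        · exact fun _ _ => mgf_nonneg
        · exact hY k
    _ = (smallBallConst * B * ε) ^ n := by
        rw [Finset.prod_const, Finset.card_fin, ← exp_one_pow, ← mul_pow, smallBallConst]
        ring
end
end

section
/- Let ζ_1,…,ζ_n be independent non-negative random variables. Assume there exist λ > 0 and μ ∈ (0,1) such that P(ζ_k < λ) ≤ μ for each k. Then there exist λ_1 > 0 and μ_1 ∈ (0,1), depending only on λ and μ, such that P(∑_{k=1}^n ζ_k² < λ_1 n) ≤ μ_1^n. -/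
open MeasureTheory ProbabilityTheory Real
open scoped ENNReal Classical

noncomputable section

/-!
Chernoff's bound for the lower tail of `∑ ζ_k²`, evaluated at a negative parameter `-s`. Since
`ζ_k² ≥ 0`, `exp (-s ζ_k²)` is at most `1` on `{ζ_k < λ}` and at most `exp (-s λ²)` elsewhere, so
each factor `𝔼 exp (-s ζ_k²)` is at most `μ + exp (-s λ²)`, which is `< 1` once `s` is large.
By independence the Laplace transform of the sum is at most the `n`-th power of this number, and
a threshold `λ₁ n` with `λ₁` small enough costs only a factor `exp (s λ₁ n)`.
-/

section Tensorization

variable {Ω : Type*} [MeasurableSpace Ω] {μ : Measure Ω}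

lemma integrable_exp_neg_mul_of_nonneg [IsFiniteMeasure μ] {Y : Ω → ℝ} (hY : Measurable Y)
    (hY₀ : ∀ ω, 0 ≤ Y ω) {s : ℝ} (hs : 0 ≤ s) : Integrable (fun ω => exp (-s * Y ω)) μ :=
  .of_mem_Icc 0 1 (by fun_prop) <| ae_of_all _ fun ω =>
    ⟨(exp_pos _).le, exp_le_one_iff.2 (by nlinarith [hY₀ ω])⟩

lemma mgf_neg_le_measureReal_lt_add_exp [IsProbabilityMeasure μ] {Y : Ω → ℝ} (hY : Measurable Y)
    (hY₀ : ∀ ω, 0 ≤ Y ω) {s : ℝ} (hs : 0 ≤ s) (a : ℝ) :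
    mgf Y μ (-s) ≤ μ.real {ω | Y ω < a} + exp (-s * a) := by
  have hA : MeasurableSet {ω | Y ω < a} := measurableSet_lt hY measurable_const
  have h_pointwise : ∀ ω, exp (-s * Y ω) ≤ {ω | Y ω < a}.indicator 1 ω + exp (-s * a) := by
    intro ω
    by_cases hω : Y ω < a
    · rw [Set.indicator_of_mem (s := {ω | Y ω < a}) hω, Pi.one_apply]
      have : exp (-s * Y ω) ≤ 1 := exp_le_one_iff.2 (by nlinarith [hY₀ ω])
      linarith [exp_pos (-s * a)]
    · rw [Set.indicator_of_notMem (s := {ω | Y ω < a}) hω, zero_add]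
      exact exp_le_exp.2 (by nlinarith)
  calc mgf Y μ (-s) = ∫ ω, exp (-s * Y ω) ∂μ := rfl
    _ ≤ ∫ ω, ({ω | Y ω < a}.indicator 1 ω + exp (-s * a)) ∂μ :=
        integral_mono (integrable_exp_neg_mul_of_nonneg hY hY₀ hs)
          (((integrable_const 1).indicator hA).add (integrable_const _)) h_pointwise
    _ = μ.real {ω | Y ω < a} + exp (-s * a) := by
        rw [integral_add ((integrable_const 1).indicator hA) (integrable_const _),
          integral_indicator_one hA, integral_const, probReal_univ, one_smul]

lemma measureReal_sum_le_le_exp_mul_pow [IsProbabilityMeasure μ] {ι : Type*} [Fintype ι]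
    {Y : ι → Ω → ℝ} (hY : ∀ k, Measurable (Y k)) (h_indep : iIndepFun Y μ) (hY₀ : ∀ k ω, 0 ≤ Y k ω)
    {s b : ℝ} (hs : 0 ≤ s) (hb : ∀ k, mgf (Y k) μ (-s) ≤ b) (t : ℝ) :
    μ.real {ω | ∑ k, Y k ω ≤ t} ≤ exp (s * t) * b ^ Fintype.card ι := by
  have h_sum : (fun ω => ∑ k, Y k ω) = ∑ k, Y k := by ext ω; simp
  have h_int : Integrable (fun ω => exp (-s * ∑ k, Y k ω)) μ :=
    integrable_exp_neg_mul_of_nonneg (by fun_prop)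
      (fun ω => Finset.sum_nonneg fun k _ => hY₀ k ω) hs
  calc μ.real {ω | ∑ k, Y k ω ≤ t} ≤ exp (- -s * t) * mgf (fun ω => ∑ k, Y k ω) μ (-s) :=
        measure_le_le_exp_mul_mgf t (neg_nonpos.2 hs) h_int
    _ = exp (s * t) * ∏ k, mgf (Y k) μ (-s) := by
        rw [neg_neg, h_sum, h_indep.mgf_sum hY]
    _ ≤ exp (s * t) * b ^ Fintype.card ι := by
        gcongr
        calc ∏ k, mgf (Y k) μ (-s) ≤ ∏ _k : ι, b :=
              Finset.prod_le_prod (fun _ _ => mgf_nonneg) fun k _ => hb k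
          _ = b ^ Fintype.card ι := by rw [Finset.prod_const, Finset.card_univ]

end Tensorization

theorem exists_measureReal_sum_lt_le_pow {a p : ℝ} (ha : 0 < a) (hp₀ : 0 ≤ p) (hp₁ : p < 1) :
    ∃ t q : ℝ, 0 < t ∧ q ∈ Set.Ioo (0 : ℝ) 1 ∧
      ∀ {Ω : Type*} [MeasurableSpace Ω] (μ : Measure Ω) [IsProbabilityMeasure μ] {n : ℕ}
        (Y : Fin n → Ω → ℝ), (∀ k, Measurable (Y k)) → iIndepFun Y μ → (∀ k ω, 0 ≤ Y k ω) →
        (∀ k, μ.real {ω | Y k ω < a} ≤ p) → μ.real {ω | ∑ k, Y k ω < t * n} ≤ q ^ n := by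
  -- `s` is chosen so that `p + exp (-s a) = (1 + p) / 2 = exp (-c)`.
  set c := -log ((1 + p) / 2)
  have hc : 0 < c := neg_pos.2 (log_neg (by linarith) (by linarith))
  set s := log (2 / (1 - p)) / a
  have hs : 0 < s := div_pos (log_pos (by rw [lt_div_iff₀ (by linarith)]; linarith)) ha
  have h_mgf_bound : p + exp (-s * a) = exp (-c) := by
    rw [neg_mul, div_mul_cancel₀ _ ha.ne', exp_neg, exp_log (by bound), neg_neg,
      exp_log (by linarith), inv_div]
    ring
  refine ⟨c / (2 * s), exp (-c / 2), by positivity,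
    ⟨exp_pos _, exp_lt_one_iff.2 (by linarith)⟩, ?_⟩
  intro Ω _ μ _ n Y hY h_indep hY₀ h_small
  calc μ.real {ω | ∑ k, Y k ω < c / (2 * s) * n}
      ≤ μ.real {ω | ∑ k, Y k ω ≤ c / (2 * s) * n} :=
        measureReal_mono (Set.ofPred_subset_ofPred.2 fun _ => le_of_lt)
    _ ≤ exp (s * (c / (2 * s) * n)) * exp (-c) ^ Fintype.card (Fin n) :=
        measureReal_sum_le_le_exp_mul_pow hY h_indep hY₀ hs.le (fun k =>
          (mgf_neg_le_measureReal_lt_add_exp (hY k) (hY₀ k) hs.le a).trans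
            (h_mgf_bound ▸ add_le_add_left (h_small k) _)) _
    _ = exp (-c / 2) ^ n := by
        rw [Fintype.card_fin, ← exp_nat_mul, ← exp_nat_mul, ← exp_add]
        congr 1
        field_simp
        ring

/-- Tensorization of small-ball probabilities (one-point bound). -/
theorem stmt1 (lam μ₀ : ℝ) (hlam : 0 < lam) (hμ₀ : μ₀ ∈ Set.Ioo (0:ℝ) 1) :
    ∃ lam₁ μ₁ : ℝ, 0 < lam₁ ∧ μ₁ ∈ Set.Ioo (0:ℝ) 1 ∧
      ∀ (Ω : Type) (_ : MeasurableSpace Ω) (μ : Measure Ω), IsProbabilityMeasure μ →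
      ∀ (n : ℕ) (ζ : Fin n → Ω → ℝ),
        (∀ k, Measurable (ζ k)) →
        iIndepFun ζ μ →
        (∀ k ω, 0 ≤ ζ k ω) →
        (∀ k, (μ {ω | ζ k ω < lam}).toReal ≤ μ₀) →
        (μ {ω | ∑ k, (ζ k ω) ^ 2 < lam₁ * n}).toReal ≤ μ₁ ^ n := by
  obtain ⟨t, q, ht, hq, h_tail⟩ :=
    exists_measureReal_sum_lt_le_pow (pow_pos hlam 2) hμ₀.1.le hμ₀.2
  refine ⟨t, q, ht, hq, fun Ω _ μ _ n ζ hζ h_indep hζ₀ h_small => ?_⟩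
  have h_sq_lt : ∀ k, {ω | ζ k ω ^ 2 < lam ^ 2} = {ω | ζ k ω < lam} := fun k => by
    ext ω
    exact pow_lt_pow_iff_left₀ (hζ₀ k ω) hlam.le two_ne_zero
  exact h_tail μ (fun k ω => ζ k ω ^ 2) (fun k => (hζ k).pow_const 2)
    (h_indep.comp _ fun _ => measurable_id.pow_const 2) (fun _ _ => sq_nonneg _)
    fun k => (h_sq_lt k).symm ▸ h_small k
end
end

section
/- Let δ, ρ ∈ (0,1] and let x ∈ S^{n-1} be incompressible, i.e. its Euclidean distance to the set of δn-sparse vectors exceeds ρ. Then there exists a set σ ⊆ {1,…,n} of cardinality |σ| ≥ (1/2)ρ²δn such that ρ/√(2n) ≤ |x_k| ≤ 1/√(δn) for all k ∈ σ. -/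
open MeasureTheory ProbabilityTheory Real
open scoped ENNReal Classical

noncomputable section

/-!
Coordinates larger than `1/√(δn)` number at most `δn` since `‖x‖ = 1`, so keeping only them gives a
sparse vector; incompressibility then leaves more than `ρ²` of the mass `‖x‖² = 1` on the remaining
coordinates. Those below `ρ/√(2n)` carry at most `n · ρ²/(2n) = ρ²/2` of it, so the coordinates in
between carry more than `ρ²/2`, each at most `1/(δn)`; hence there are more than `ρ²δn/2` of them.
-/

open Finset

section SumSq

variable {ι : Type*} {s : Finset ι} {f : ι → ℝ} {t : ℝ}

lemma card_mul_sq_le_sum_sq (ht : 0 ≤ t) (h : ∀ k ∈ s, t ≤ |f k|) :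
    #s * t ^ 2 ≤ ∑ k ∈ s, f k ^ 2 := by
  simpa using s.card_nsmul_le_sum (fun k => f k ^ 2) (t ^ 2) fun k hk => by
    simpa only [sq_abs] using pow_le_pow_left₀ ht (h k hk) 2

lemma sum_sq_le_card_mul_sq (h : ∀ k ∈ s, |f k| ≤ t) :
    ∑ k ∈ s, f k ^ 2 ≤ #s * t ^ 2 := by
  simpa using s.sum_le_card_nsmul (fun k => f k ^ 2) (t ^ 2) fun k hk => by
    simpa only [sq_abs] using pow_le_pow_left₀ (abs_nonneg _) (h k hk) 2

lemma sum_sq_le_card_filter_mul_sq_add (h : ∀ k ∈ s, |f k| ≤ t) (m : ℝ) :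
    ∑ k ∈ s, f k ^ 2 ≤ #{k ∈ s | m ≤ |f k|} * t ^ 2 + #s * m ^ 2 := by
  rw [← sum_filter_add_sum_filter_not s (fun k => m ≤ |f k|)]
  gcongr
  · exact sum_sq_le_card_mul_sq fun k hk => h k (mem_filter.1 hk).1
  · calc ∑ k ∈ s with ¬m ≤ |f k|, f k ^ 2
        ≤ #{k ∈ s | ¬m ≤ |f k|} * m ^ 2 :=
          sum_sq_le_card_mul_sq fun k hk => (not_le.1 (mem_filter.1 hk).2).le
      _ ≤ #s * m ^ 2 := by gcongr; exact filter_subset _ _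

end SumSq

namespace EuclideanSpace

variable {ι : Type*} [Fintype ι]

lemma card_filter_lt_abs_mul_sq_le_norm_sq (x : EuclideanSpace ℝ ι) {t : ℝ} (ht : 0 ≤ t) :
    #{k | t < |x k|} * t ^ 2 ≤ ‖x‖ ^ 2 := by
  rw [real_norm_sq_eq]
  calc #{k | t < |x k|} * t ^ 2 ≤ ∑ k with t < |x k|, x k ^ 2 :=
        card_mul_sq_le_sum_sq ht fun k hk => (mem_filter.1 hk).2.le
    _ ≤ ∑ k, x k ^ 2 := sum_le_univ_sum_of_nonneg fun k => sq_nonneg _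

variable [DecidableEq ι]

lemma dist_toLp_piecewise_zero_sq (x : EuclideanSpace ℝ ι) (s : Finset ι) :
    dist x (WithLp.toLp 2 (s.piecewise x 0)) ^ 2 = ∑ k ∈ sᶜ, x k ^ 2 := by
  rw [dist_sq_eq, ← sum_add_sum_compl s]
  rw [sum_eq_zero fun k hk => by simp [piecewise_eq_of_mem _ _ _ hk], zero_add]
  exact sum_congr rfl fun k hk => by
    simp [piecewise_eq_of_notMem _ _ _ (mem_compl.1 hk)]

lemma card_ne_zero_toLp_piecewise_zero_le (x : EuclideanSpace ℝ ι) (s : Finset ι) :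
    Nat.card {k // WithLp.toLp 2 (s.piecewise x 0) k ≠ 0} ≤ #s := by
  rw [Nat.card_eq_fintype_card, Fintype.card_subtype]
  refine card_le_card fun k hk => ?_
  by_contra hks
  simp [piecewise_eq_of_notMem _ _ _ hks] at hk

end EuclideanSpace

lemma sq_lt_sum_sq_compl_of_mem_incompVecs {n : ℕ} {δ ρ : ℝ} (hρ : 0 ≤ ρ) {x : EucSp n}
    (hx : x ∈ incompVecs n δ ρ) {s : Finset (Fin n)} (hs : (#s : ℝ) ≤ δ * n) :
    ρ ^ 2 < ∑ k ∈ sᶜ, x k ^ 2 := by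
  have hsparse : WithLp.toLp 2 (s.piecewise x 0) ∈ sparseVecs n δ :=
    (Nat.cast_le.2 (EuclideanSpace.card_ne_zero_toLp_piecewise_zero_le x s)).trans hs
  rw [← EuclideanSpace.dist_toLp_piecewise_zero_sq]
  gcongr
  exact hx.2.trans_le (Metric.infDist_le_dist_of_mem hsparse)

/-- Incompressible vectors are spread: many coordinates of comparable magnitude. -/
theorem stmt6 (n : ℕ) (δ ρ : ℝ) (hδ : δ ∈ Set.Ioc (0:ℝ) 1) (hρ : ρ ∈ Set.Ioc (0:ℝ) 1)
    (x : EucSp n) (hx : x ∈ incompVecs n δ ρ) :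
    ∃ σ : Finset (Fin n), (1/2) * ρ ^ 2 * δ * n ≤ (σ.card : ℝ) ∧
      ∀ k ∈ σ, ρ / Real.sqrt (2 * n) ≤ |x k| ∧ |x k| ≤ 1 / Real.sqrt (δ * n) := by
  have hn : (0 : ℝ) < n := by
    rcases n.eq_zero_or_pos with rfl | hn
    · simpa [Subsingleton.elim x 0] using hx.1
    · exact_mod_cast hn
  have hδn : 0 < δ * n := mul_pos hδ.1 hn
  set A : Finset (Fin n) := {k | 1 / √(δ * n) < |x k|}
  have hA : (#A : ℝ) ≤ δ * n := by
    have := EuclideanSpace.card_filter_lt_abs_mul_sq_le_norm_sq x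
      (t := 1 / √(δ * n)) (by positivity)
    rwa [hx.1, div_pow, Real.sq_sqrt hδn.le, one_pow, mul_one_div, div_le_one hδn] at this
  have hmass := sq_lt_sum_sq_compl_of_mem_incompVecs hρ.1.le hx hA
  have hsmall : ∀ k ∈ Aᶜ, |x k| ≤ 1 / √(δ * n) := fun k hk => by simpa [A] using hk
  have hspread := sum_sq_le_card_filter_mul_sq_add hsmall (ρ / √(2 * n))
  have hAc : (#Aᶜ : ℝ) ≤ n := by exact_mod_cast (card_le_univ _).trans_eq (Fintype.card_fin n)
  set σ : Finset (Fin n) := {k ∈ Aᶜ | ρ / √(2 * n) ≤ |x k|}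
  refine ⟨σ, ?_, fun k hk => ⟨(mem_filter.1 hk).2, hsmall k (mem_filter.1 hk).1⟩⟩
  rw [div_pow, div_pow, one_pow, Real.sq_sqrt hδn.le, Real.sq_sqrt (by positivity)] at hspread
  have hlowMass : (#Aᶜ : ℝ) * (ρ ^ 2 / (2 * n)) ≤ ρ ^ 2 / 2 :=
    calc _ ≤ n * (ρ ^ 2 / (2 * n)) := by gcongr
      _ = ρ ^ 2 / 2 := by field_simp
  have hmidMass : ρ ^ 2 / 2 < #σ * (1 / (δ * n)) := by linarith
  rw [mul_one_div, lt_div_iff₀ hδn] at hmidMass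
  linarith
end
end

section
/- Let x ∈ S^{n-1} be an incompressible vector with parameters (δ, ρ), and let σ ⊆ {1,…,n} be a subset of cardinality at least (1/2)ρ²δn on which ρ/√(2n) ≤ |x_k| ≤ 1/√(δn). Then ‖P_σ x‖_2 ≥ (1/2)ρ²√δ and (‖P_σ x‖_3 / ‖P_σ x‖_2)³ ≤ 2/(ρ²δ√n), where P_σ is the coordinate projection onto ℝ^σ. -/
open MeasureTheory ProbabilityTheory Real
open scoped ENNReal Classical

noncomputable section

/-!
The lower bound `|x k| ≥ ρ / √(2n)` on at least `ρ²δn / 2` coordinates gives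
`‖P_σ x‖₂² ≥ ρ⁴δ / 4`. The upper bound `|x k| ≤ 1 / √(δn)` gives
`‖P_σ x‖₃³ ≤ ‖P_σ x‖₂² / √(δn)`, hence `(‖P_σ x‖₃ / ‖P_σ x‖₂)³ ≤ 1 / (√(δn) ‖P_σ x‖₂)`, and the first
bound finishes the estimate.
-/

namespace Finset

variable {ι : Type*} (s : Finset ι) (f : ι → ℝ)

theorem card_mul_sq_le_sum_sq {a : ℝ} (ha : 0 ≤ a) (hf : ∀ k ∈ s, a ≤ |f k|) :
    #s * a ^ 2 ≤ ∑ k ∈ s, f k ^ 2 := by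
  rw [← nsmul_eq_mul]
  refine card_nsmul_le_sum s _ _ fun k hk => ?_
  simpa only [sq_abs] using pow_le_pow_left₀ ha (hf k hk) 2

theorem sum_abs_pow_three_le_mul_sum_sq {M : ℝ} (hf : ∀ k ∈ s, |f k| ≤ M) :
    ∑ k ∈ s, |f k| ^ 3 ≤ M * ∑ k ∈ s, f k ^ 2 := by
  rw [mul_sum]
  refine sum_le_sum fun k hk => ?_
  calc |f k| ^ 3 = |f k| * f k ^ 2 := by rw [pow_succ', sq_abs]
    _ ≤ M * f k ^ 2 := mul_le_mul_of_nonneg_right (hf k hk) (sq_nonneg _)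

theorem l3_div_l2_pow_three_le {M : ℝ} (hf : ∀ k ∈ s, |f k| ≤ M) :
    ((∑ k ∈ s, |f k| ^ 3) ^ ((1 : ℝ) / 3) / √(∑ k ∈ s, f k ^ 2)) ^ 3 ≤
      M / √(∑ k ∈ s, f k ^ 2) := by
  set S2 := ∑ k ∈ s, f k ^ 2
  have hS3 : 0 ≤ ∑ k ∈ s, |f k| ^ 3 := sum_nonneg fun k _ => by positivity
  have hS2nn : 0 ≤ S2 := sum_nonneg fun k _ => sq_nonneg (f k)
  obtain hS2 | hS2 := hS2nn.eq_or_lt'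
  · simp [hS2]
  have hcube : √S2 ^ 3 = S2 * √S2 := by rw [pow_succ, sq_sqrt hS2.le]
  have hroot : ((∑ k ∈ s, |f k| ^ 3) ^ ((1 : ℝ) / 3)) ^ 3 = ∑ k ∈ s, |f k| ^ 3 := by
    rw [← rpow_natCast, ← rpow_mul hS3]
    norm_num
  rw [div_pow, hroot, hcube]
  calc (∑ k ∈ s, |f k| ^ 3) / (S2 * √S2) ≤ M * S2 / (S2 * √S2) := by
        gcongr
        exact sum_abs_pow_three_le_mul_sum_sq s f hf
    _ = M / √S2 := by rw [mul_comm S2, mul_div_mul_right _ _ hS2.ne']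

end Finset

theorem stmt7_general (n : ℕ) (hn : 1 ≤ n) (δ ρ : ℝ)
    (hδ : δ ∈ Set.Ioc (0:ℝ) 1) (hρ : ρ ∈ Set.Ioc (0:ℝ) 1)
    (x : EucSp n)
    (σ : Finset (Fin n)) (hcard : (1/2) * ρ ^ 2 * δ * n ≤ (σ.card : ℝ))
    (hσ : ∀ k ∈ σ, ρ / Real.sqrt (2 * n) ≤ |x k| ∧ |x k| ≤ 1 / Real.sqrt (δ * n)) :
    ρ ^ 2 * Real.sqrt δ / 2 ≤ Real.sqrt (∑ k ∈ σ, (x k) ^ 2) ∧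
      ((∑ k ∈ σ, |x k| ^ 3) ^ ((1:ℝ)/3) / Real.sqrt (∑ k ∈ σ, (x k) ^ 2)) ^ 3 ≤
        2 / (ρ ^ 2 * δ * Real.sqrt n) := by
  obtain ⟨hδ0, -⟩ := hδ
  obtain ⟨hρ0, -⟩ := hρ
  have hn0 : (0 : ℝ) < n := by exact_mod_cast hn
  have hS2 : (ρ ^ 2 * √δ / 2) ^ 2 ≤ ∑ k ∈ σ, x k ^ 2 := by
    have hsum := σ.card_mul_sq_le_sum_sq (fun k => x k) (by positivity) fun k hk => (hσ k hk).1
    calc (ρ ^ 2 * √δ / 2) ^ 2 = (1 / 2 * ρ ^ 2 * δ * n) * (ρ / √(2 * n)) ^ 2 := by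
          rw [div_pow ρ, sq_sqrt (by positivity), div_pow, mul_pow, sq_sqrt hδ0.le]
          field_simp
      _ ≤ σ.card * (ρ / √(2 * n)) ^ 2 := by gcongr
      _ ≤ _ := hsum
  have hl2 : ρ ^ 2 * √δ / 2 ≤ √(∑ k ∈ σ, x k ^ 2) := le_sqrt_of_sq_le hS2
  refine ⟨hl2, ?_⟩
  calc _ ≤ 1 / √(δ * n) / √(∑ k ∈ σ, x k ^ 2) :=
        σ.l3_div_l2_pow_three_le (fun k => x k) fun k hk => (hσ k hk).2
    _ ≤ 1 / √(δ * n) / (ρ ^ 2 * √δ / 2) := by gcongr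
    _ = 2 / (ρ ^ 2 * δ * √n) := by
        rw [sqrt_mul hδ0.le]
        field_simp
        rw [sq_sqrt hδ0.le]

/-- Bounds for the coordinate projection of an incompressible vector onto a spread set `σ`. -/
theorem stmt7 (n : ℕ) (hn : 1 ≤ n) (δ ρ : ℝ)
    (hδ : δ ∈ Set.Ioc (0:ℝ) 1) (hρ : ρ ∈ Set.Ioc (0:ℝ) 1)
    (x : EucSp n) (hx : x ∈ incompVecs n δ ρ)
    (σ : Finset (Fin n)) (hcard : (1/2) * ρ ^ 2 * δ * n ≤ (σ.card : ℝ))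
    (hσ : ∀ k ∈ σ, ρ / Real.sqrt (2 * n) ≤ |x k| ∧ |x k| ≤ 1 / Real.sqrt (δ * n)) :
    ρ ^ 2 * Real.sqrt δ / 2 ≤ Real.sqrt (∑ k ∈ σ, (x k) ^ 2) ∧
      ((∑ k ∈ σ, |x k| ^ 3) ^ ((1:ℝ)/3) / Real.sqrt (∑ k ∈ σ, (x k) ^ 2)) ^ 3 ≤
        2 / (ρ ^ 2 * δ * Real.sqrt n) :=
  stmt7_general n hn δ ρ hδ hρ x σ hcard hσ
end
end

section
/- Let Z be an N×n random matrix with columns Z_1,…,Z_n, let m ≤ min{d, ⌊ρ²δn/2⌋}, and for an m-element subset J ⊆ {1,…,n} let H_{J^c} = span(Z_k : k ∉ J). Then for every ε > 0, P( inf_{x ∈ Incomp_n(δ,ρ)} ‖Zx‖_2 < ερ√(m/(2n)) ) ≤ (c₂δ)^{-m} · max_J P( inf_{x ∈ S^J} dist(Zx, H_{J^c}) < ε ), where the max is over m-element subsets J and c₂ is the constant from the random-subset lemma. -/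
/-
For incompressible `x`, at most `δn` coordinates exceed `1/√(δn)`; deleting them leaves mass
`> ρ²` (the deleted part is sparse), and coordinates below `ρ/√(2n)` carry mass `≤ ρ²/2`.
Hence the spread part `σ(x)`, where `ρ/√(2n) ≤ |x k| ≤ 1/√(δn)`, has at least `ρ²δn/2`
elements. For every `m`-subset `J ⊆ σ(x)` the vector `y = P_J x / ‖P_J x‖` is totally spread,
`‖P_J x‖ ≥ ρ√(m/2n)`, and `Zx - ‖P_J x‖ Zy ∈ H_{J^c}`, so `dist(Zy, H_{J^c}) < ε` whenever
`‖Zx‖ < ερ√(m/2n)`. So on the event on the left, at least `C(|σ(x)|, m) ≥ (c₂δ)^m C(n, m)` of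
the events on the right occur, with `c₂ = ρ²/(2e)` coming from `(s/m)^m ≤ C(s, m) ≤ (es/m)^m`,
and double counting gives the bound.
-/

open MeasureTheory ProbabilityTheory Real
open scoped ENNReal Classical

noncomputable section

/-- The set `S^J` of totally spread unit vectors supported on `J`, with parameters
`K₁ = ρ√(δ/2)` and `K₂ = K₁⁻¹`. -/
def spreadVecs (n : ℕ) (J : Finset (Fin n)) (m : ℕ) (δ ρ : ℝ) : Set (EucSp n) :=
  {y | ‖y‖ = 1 ∧ (∀ k, k ∉ J → y k = 0) ∧
    ∀ k ∈ J, ρ * Real.sqrt (δ / 2) / Real.sqrt m ≤ |y k| ∧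
      |y k| ≤ (ρ * Real.sqrt (δ / 2))⁻¹ / Real.sqrt m}


namespace Nat

lemma pow_div_le_choose {s m : ℕ} (hms : m ≤ s) : ((s : ℝ) / m) ^ m ≤ s.choose m := by
  have hdesc : ((s : ℝ) / m) ^ m * m ! ≤ s.descFactorial m := by
    rw [← descFactorial_self, descFactorial_eq_prod_range, descFactorial_eq_prod_range,
      ← Finset.card_range m, ← Finset.prod_const, Finset.card_range, Nat.cast_prod,
      Nat.cast_prod, ← Finset.prod_mul_distrib]
    refine Finset.prod_le_prod (fun i _ => by positivity) fun i hi => ?_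
    have him : i < m := Finset.mem_range.1 hi
    rw [Nat.cast_sub him.le, Nat.cast_sub (him.le.trans hms), div_mul_eq_mul_div,
      div_le_iff₀ (by exact_mod_cast (Nat.zero_le i).trans_lt him)]
    have : (m : ℝ) ≤ s := by exact_mod_cast hms
    nlinarith [(Nat.cast_nonneg i : (0 : ℝ) ≤ i)]
  rw [descFactorial_eq_factorial_mul_choose, Nat.cast_mul, mul_comm (m ! : ℝ)] at hdesc
  exact le_of_mul_le_mul_right hdesc (by positivity)

lemma choose_le_exp_mul_div_pow (n m : ℕ) : (n.choose m : ℝ) ≤ (exp 1 * n / m) ^ m := by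
  rcases m.eq_zero_or_pos with rfl | hm
  · simp
  have hm' : (0 : ℝ) < m := by exact_mod_cast hm
  have hfact : ((m : ℝ) / exp 1) ^ m ≤ m ! := by
    have := Real.pow_div_factorial_le_exp (x := (m : ℝ)) hm'.le m
    rw [← Real.exp_one_pow, div_le_iff₀ (by positivity)] at this
    rw [div_pow, div_le_iff₀ (by positivity)]
    linarith
  calc (n.choose m : ℝ) ≤ n ^ m / m ! := choose_le_pow_div m n
    _ ≤ n ^ m / ((m : ℝ) / exp 1) ^ m := by gcongr
    _ = (exp 1 * n / m) ^ m := by rw [← div_pow]; congr 1; field_simp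

lemma pow_mul_choose_le_choose {n m s : ℕ} {q : ℝ} (hq : 0 ≤ q) (hms : m ≤ s)
    (hs : q * exp 1 * n ≤ s) : q ^ m * n.choose m ≤ s.choose m :=
  calc q ^ m * n.choose m ≤ q ^ m * (exp 1 * n / m) ^ m := by
        gcongr; exact choose_le_exp_mul_div_pow n m
    _ = (q * exp 1 * n / m) ^ m := by rw [← mul_pow]; ring
    _ ≤ ((s : ℝ) / m) ^ m := by gcongr
    _ ≤ s.choose m := pow_div_le_choose hms

end Nat

section Counting

variable {Ω ι : Type*} [MeasurableSpace Ω] (μ : Measure Ω) [Fintype ι] (E : ι → Set Ω) (B : Set Ω)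

/-- Markov's inequality for `ω ↦ #{i | ω ∈ E i}`. -/
lemma mul_measure_le_sum_measure_of_le_card (K : ℝ≥0∞)
    (h : ∀ ω ∈ B, K ≤ (Finset.univ.filter (fun i => ω ∈ E i)).card) :
    K * μ B ≤ ∑ i, μ (E i) := by
  set f : Ω → ℝ≥0∞ := fun ω => ∑ i, (toMeasurable μ (E i)).indicator 1 ω
  have hf : Measurable f :=
    Finset.measurable_sum _ fun i _ => measurable_one.indicator (measurableSet_toMeasurable μ _)
  have hB : B ⊆ {ω | K ≤ f ω} := fun ω hω => by
    refine (h ω hω).trans ?_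
    rw [Finset.card_eq_sum_ones, Nat.cast_sum, Nat.cast_one, Finset.sum_filter]
    refine Finset.sum_le_sum fun i _ => ?_
    split_ifs with hi
    · simp [Set.indicator_of_mem (subset_toMeasurable μ (E i) hi)]
    · exact zero_le
  calc K * μ B ≤ K * μ {ω | K ≤ f ω} := by gcongr
    _ ≤ ∫⁻ ω, f ω ∂μ := mul_meas_ge_le_lintegral hf K
    _ = ∑ i, μ (E i) := by
      rw [lintegral_finsetSum _ fun i _ =>
        measurable_one.indicator (measurableSet_toMeasurable μ _)]
      simp_rw [lintegral_indicator_one (measurableSet_toMeasurable μ _), measure_toMeasurable]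

lemma toReal_measure_le_inv_mul_iSup [IsFiniteMeasure μ] [Nonempty ι] {q : ℝ} (hq : 0 < q)
    (h : ∀ ω ∈ B, q * Fintype.card ι ≤ (Finset.univ.filter (fun i => ω ∈ E i)).card) :
    (μ B).toReal ≤ q⁻¹ * ⨆ i, (μ (E i)).toReal := by
  set M := ⨆ i, (μ (E i)).toReal
  have hM : ∀ i, (μ (E i)).toReal ≤ M := le_ciSup (Set.finite_range _).bddAbove
  have hcount := mul_measure_le_sum_measure_of_le_card μ E B (ENNReal.ofReal (q * Fintype.card ι))
    fun ω hω => by simpa [ENNReal.ofReal_le_iff_le_toReal] using h ω hω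
  have hreal : q * Fintype.card ι * (μ B).toReal ≤ Fintype.card ι * M := by
    have := ENNReal.toReal_mono (ENNReal.sum_ne_top.2 fun i _ => measure_ne_top μ _) hcount
    rw [ENNReal.toReal_mul, ENNReal.toReal_ofReal (by positivity),
      ENNReal.toReal_sum fun i _ => measure_ne_top μ _] at this
    refine this.trans ?_
    simpa using Finset.sum_le_card_nsmul Finset.univ _ M fun i _ => hM i
  have hcard : (0 : ℝ) < Fintype.card ι := by exact_mod_cast Fintype.card_pos
  rw [le_inv_mul_iff₀ hq]
  nlinarith

end Counting

section CoordProj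

variable {ι : Type*} [DecidableEq ι]

/-- The coordinate projection `P_J`. -/
def coordProj (J : Finset ι) (x : EuclideanSpace ℝ ι) : EuclideanSpace ℝ ι :=
  WithLp.toLp 2 fun k => if k ∈ J then x k else 0

lemma coordProj_apply (J : Finset ι) (x : EuclideanSpace ℝ ι) (k : ι) :
    coordProj J x k = if k ∈ J then x k else 0 := rfl

lemma norm_coordProj_sq [Fintype ι] (J : Finset ι) (x : EuclideanSpace ℝ ι) :
    ‖coordProj J x‖ ^ 2 = ∑ k ∈ J, x k ^ 2 := by
  simp [EuclideanSpace.real_norm_sq_eq, coordProj_apply, ite_pow, Finset.sum_ite_mem]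

lemma sub_coordProj [Fintype ι] (J : Finset ι) (x : EuclideanSpace ℝ ι) :
    x - coordProj J x = coordProj Jᶜ x := by
  ext k
  by_cases hk : k ∈ J <;> simp [coordProj_apply, hk]

end CoordProj

lemma coordProj_mem_sparseVecs {n : ℕ} {δ : ℝ} {J : Finset (Fin n)} (hJ : (J.card : ℝ) ≤ δ * n)
    (x : EucSp n) : coordProj J x ∈ sparseVecs n δ := by
  refine le_trans ?_ hJ
  rw [Nat.card_eq_fintype_card, Fintype.card_subtype, Nat.cast_le]
  exact Finset.card_le_card fun k hk => by_contra fun hkJ => by simp_all [coordProj_apply]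

lemma sq_lt_sum_compl_sq_of_mem_incompVecs {n : ℕ} {δ ρ : ℝ} (hρ : 0 ≤ ρ) {x : EucSp n}
    (hx : x ∈ incompVecs n δ ρ) {A : Finset (Fin n)} (hA : (A.card : ℝ) ≤ δ * n) :
    ρ ^ 2 < ∑ k ∈ Aᶜ, x k ^ 2 := by
  have : ρ < ‖coordProj Aᶜ x‖ := by
    rw [← sub_coordProj, ← dist_eq_norm]
    exact hx.2.trans_le (Metric.infDist_le_dist_of_mem (coordProj_mem_sparseVecs hA x))
  rw [← norm_coordProj_sq]
  exact pow_lt_pow_left₀ this hρ two_ne_zero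

/-- The spread part `σ(x)`: coordinates with `ρ / √(2n) ≤ |x k| ≤ 1 / √(δn)`. -/
def spreadCoords (n : ℕ) (δ ρ : ℝ) (x : EucSp n) : Finset (Fin n) :=
  Finset.univ.filter fun k => δ * n * x k ^ 2 ≤ 1 ∧ ρ ^ 2 ≤ 2 * n * x k ^ 2

lemma le_card_spreadCoords {n : ℕ} {δ ρ : ℝ} (hδ : 0 < δ) (hρ : 0 ≤ ρ) {x : EucSp n}
    (hx : x ∈ incompVecs n δ ρ) : ρ ^ 2 * δ * n / 2 ≤ (spreadCoords n δ ρ x).card := by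
  set A : Finset (Fin n) := Finset.univ.filter fun k => 1 < δ * n * x k ^ 2
  have hnorm : ∑ k, x k ^ 2 = 1 := by rw [← EuclideanSpace.real_norm_sq_eq, hx.1, one_pow]
  have hA : (A.card : ℝ) ≤ δ * n := by
    calc (A.card : ℝ) ≤ ∑ k ∈ A, δ * n * x k ^ 2 := by
          simpa using Finset.card_nsmul_le_sum A _ 1 fun k hk => (Finset.mem_filter.1 hk).2.le
      _ ≤ ∑ k, δ * n * x k ^ 2 :=
          Finset.sum_le_univ_sum_of_nonneg fun k => by positivity
      _ = δ * n := by rw [← Finset.mul_sum, hnorm, mul_one]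
  have hmass := sq_lt_sum_compl_sq_of_mem_incompVecs hρ hx hA
  have hn : 0 < n := Nat.pos_of_ne_zero fun h => by subst h; simp at hnorm
  set small := Aᶜ.filter fun k => ¬ ρ ^ 2 ≤ 2 * n * x k ^ 2
  have hsmall : 2 * n * ∑ k ∈ small, x k ^ 2 ≤ n * ρ ^ 2 := by
    calc 2 * n * ∑ k ∈ small, x k ^ 2 = ∑ k ∈ small, 2 * n * x k ^ 2 := Finset.mul_sum _ _ _
      _ ≤ small.card * ρ ^ 2 := by
          simpa using Finset.sum_le_card_nsmul small _ (ρ ^ 2)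
            fun k hk => (not_le.1 (Finset.mem_filter.1 hk).2).le
      _ ≤ n * ρ ^ 2 := by
          gcongr
          simpa using Finset.card_le_univ small
  have hσ : spreadCoords n δ ρ x = Aᶜ.filter fun k => ρ ^ 2 ≤ 2 * n * x k ^ 2 := by
    ext; simp [spreadCoords, A]
  have hsplit : ∑ k ∈ Aᶜ, x k ^ 2 = ∑ k ∈ spreadCoords n δ ρ x, x k ^ 2 + ∑ k ∈ small, x k ^ 2 := by
    rw [hσ, Finset.sum_filter_add_sum_filter_not]
  have hσmass : ρ ^ 2 / 2 ≤ ∑ k ∈ spreadCoords n δ ρ x, x k ^ 2 := by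
    have : (0 : ℝ) < n := by exact_mod_cast hn
    nlinarith
  calc ρ ^ 2 * δ * n / 2 ≤ ∑ k ∈ spreadCoords n δ ρ x, δ * n * x k ^ 2 := by
        rw [← Finset.mul_sum]; nlinarith [mul_pos hδ (Nat.cast_pos.2 hn : (0 : ℝ) < n)]
    _ ≤ (spreadCoords n δ ρ x).card := by
        simpa using Finset.sum_le_card_nsmul (spreadCoords n δ ρ x) (fun k => δ * n * x k ^ 2) 1
          fun k hk => (Finset.mem_filter.1 hk).2.1

lemma inv_norm_smul_coordProj_mem_spreadVecs {n m : ℕ} {δ ρ : ℝ} (hδ : 0 < δ) (hρ : 0 < ρ)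
    {J : Finset (Fin n)} (hJ : J.card = m) {x : EucSp n} (hx : coordProj J x ≠ 0)
    (hratio : ∀ k ∈ J, ∀ l ∈ J, ρ ^ 2 * δ / 2 * x l ^ 2 ≤ x k ^ 2) :
    ‖coordProj J x‖⁻¹ • coordProj J x ∈ spreadVecs n J m δ ρ := by
  set c := ‖coordProj J x‖
  have hc : 0 < c := norm_pos_iff.2 hx
  have hc2 : c ^ 2 = ∑ l ∈ J, x l ^ 2 := norm_coordProj_sq J x
  refine ⟨norm_smul_inv_norm hx, fun k hk => by simp [coordProj_apply, hk], fun k hk => ?_⟩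
  have hm : (0 : ℝ) < m := by
    rw [← hJ]; exact_mod_cast Finset.card_pos.2 ⟨k, hk⟩
  have hlow : ρ ^ 2 * δ / 2 * c ^ 2 ≤ m * x k ^ 2 := by
    rw [hc2, Finset.mul_sum, ← hJ]
    simpa using Finset.sum_le_card_nsmul J _ _ fun l hl => hratio k hk l hl
  have hup : m * (ρ ^ 2 * δ / 2 * x k ^ 2) ≤ c ^ 2 := by
    rw [hc2, ← hJ]
    simpa using Finset.card_nsmul_le_sum J _ _ fun l hl => hratio l hl k hk
  have hsqδ : √(δ / 2) ^ 2 = δ / 2 := Real.sq_sqrt (by positivity)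
  have hK0 : 0 < ρ * √(δ / 2) := by positivity
  have hsqm : √(m : ℝ) ^ 2 = m := Real.sq_sqrt hm.le
  have hy : |(c⁻¹ • coordProj J x) k| = |x k| / c := by
    simp [coordProj_apply, hk, abs_mul, abs_of_pos hc, div_eq_inv_mul]
  rw [hy, div_le_div_iff₀ (by positivity) hc, div_le_div_iff₀ hc (by positivity)]
  constructor
  · refine (pow_le_pow_iff_left₀ (by positivity) (by positivity) two_ne_zero).1 ?_
    simp only [mul_pow, hsqδ, hsqm, sq_abs]
    linarith
  · rw [← mul_le_mul_iff_of_pos_left hK0, ← mul_assoc, mul_inv_cancel_left₀ hK0.ne']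
    refine (pow_le_pow_iff_left₀ (by positivity) hc.le two_ne_zero).1 ?_
    simp only [mul_pow, hsqδ, hsqm, sq_abs]
    linarith

section ColumnSpan

variable {N n : ℕ} (A : Matrix (Fin N) (Fin n) ℝ) (J : Finset (Fin n))

/-- `H_{J^c}`: the span of the columns of `A` outside `J`. -/
def colSpanOff : Submodule ℝ (EucSp N) :=
  Submodule.span ℝ {v : EucSp N | ∃ k ∉ J, v = fun i => A i k}

lemma mulVecE_mem_colSpanOff {z : EucSp n} (hz : ∀ k ∈ J, z k = 0) :
    mulVecE A z ∈ colSpanOff A J := by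
  have hsum : mulVecE A z = ∑ k, z k • (WithLp.toLp 2 fun i => A i k : EucSp N) := by
    ext i
    simp [mulVecE, Matrix.mulVec, dotProduct, mul_comm]
  rw [hsum]
  refine Submodule.sum_mem _ fun k _ => ?_
  by_cases hk : k ∈ J
  · simp [hz k hk]
  · exact Submodule.smul_mem _ _ (Submodule.subset_span ⟨k, hk, rfl⟩)

/-- `A (y - c⁻¹ • x) ∈ H_{J^c}` lies at distance `‖A x‖ / c` from `A y`. -/
lemma infDist_mulVecE_colSpanOff_le {x y : EucSp n} {c : ℝ} (hc : 0 < c)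
    (hxy : ∀ k ∈ J, x k = c * y k) :
    Metric.infDist (mulVecE A y) (colSpanOff A J) ≤ ‖mulVecE A x‖ / c := by
  have hlin : ∀ u, mulVecE A u = Matrix.toLpLin 2 2 A u := fun _ => rfl
  have hmem : mulVecE A (y - c⁻¹ • x) ∈ colSpanOff A J :=
    mulVecE_mem_colSpanOff A J fun k hk => by simp [hxy k hk, hc.ne']
  calc Metric.infDist (mulVecE A y) (colSpanOff A J)
      ≤ dist (mulVecE A y) (mulVecE A (y - c⁻¹ • x)) := Metric.infDist_le_dist_of_mem hmem
    _ = ‖mulVecE A x‖ / c := by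
      simp only [hlin, map_sub, map_smul, dist_eq_norm, sub_sub_cancel, norm_smul,
        Real.norm_eq_abs, abs_inv, abs_of_pos hc, inv_mul_eq_div]

end ColumnSpan

lemma exists_mem_spreadVecs_infDist_lt {N n m : ℕ} {δ ρ ε : ℝ} (hδ : 0 < δ) (hρ : 0 < ρ)
    (hε : 0 ≤ ε) (A : Matrix (Fin N) (Fin n) ℝ) {x : EucSp n} {J : Finset (Fin n)}
    (hJσ : J ⊆ spreadCoords n δ ρ x) (hJ : J.card = m) (hm : 1 ≤ m)
    (hAx : ‖mulVecE A x‖ < ε * ρ * √(m / (2 * n))) :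
    ∃ y ∈ spreadVecs n J m δ ρ, Metric.infDist (mulVecE A y) (colSpanOff A J) < ε := by
  have hn : (0 : ℝ) < n := by
    have := J.card_le_univ
    simp only [Fintype.card_fin] at this
    exact_mod_cast (hm.trans (hJ ▸ this))
  have hcoord : ∀ k ∈ J, δ * n * x k ^ 2 ≤ 1 ∧ ρ ^ 2 ≤ 2 * n * x k ^ 2 := fun k hk =>
    (Finset.mem_filter.1 (hJσ hk)).2
  set c := ‖coordProj J x‖
  have hc_ge : ρ * √(m / (2 * n)) ≤ c := by
    refine (pow_le_pow_iff_left₀ (by positivity) (norm_nonneg _) two_ne_zero).1 ?_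
    rw [norm_coordProj_sq, mul_pow, Real.sq_sqrt (by positivity), ← hJ]
    calc ρ ^ 2 * (J.card / (2 * n)) = J.card * (ρ ^ 2 / (2 * n)) := by ring
      _ ≤ ∑ k ∈ J, x k ^ 2 := by
        simpa using Finset.card_nsmul_le_sum J _ _ fun k hk =>
          (div_le_iff₀' (by positivity)).2 (hcoord k hk).2
  have hc : 0 < c := lt_of_lt_of_le (by positivity) hc_ge
  have hratio : ∀ k ∈ J, ∀ l ∈ J, ρ ^ 2 * δ / 2 * x l ^ 2 ≤ x k ^ 2 := fun k hk l hl => by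
    have h1 : ρ ^ 2 * (δ * n * x l ^ 2) ≤ ρ ^ 2 :=
      mul_le_of_le_one_right (by positivity) (hcoord l hl).1
    have h2 := (hcoord k hk).2
    rw [← mul_le_mul_iff_of_pos_left (by positivity : (0 : ℝ) < 2 * n)]
    nlinarith
  refine ⟨c⁻¹ • coordProj J x,
    inv_norm_smul_coordProj_mem_spreadVecs hδ hρ hJ (norm_pos_iff.1 hc) hratio, ?_⟩
  calc Metric.infDist (mulVecE A (c⁻¹ • coordProj J x)) (colSpanOff A J)
      ≤ ‖mulVecE A x‖ / c :=
        infDist_mulVecE_colSpanOff_le A J hc fun k hk => by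
          simp [coordProj_apply, hk, hc.ne']
    _ < ε := by
        rw [div_lt_iff₀ hc]
        calc ‖mulVecE A x‖ < ε * (ρ * √(m / (2 * n))) := by rwa [← mul_assoc]
          _ ≤ ε * c := by gcongr

/-- Reduction of the invertibility problem on incompressible vectors to a uniform
distance problem between `Zx` and the span `H_{J^c}` of the columns of `Z` outside `J`. -/
theorem stmt9 (ρ : ℝ) (hρ : ρ ∈ Set.Ioc (0:ℝ) 1) :
    ∃ c₂ : ℝ, 0 < c₂ ∧
      ∀ (Ω : Type) (_ : MeasurableSpace Ω) (μ : Measure Ω), IsProbabilityMeasure μ →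
      ∀ (N n d m : ℕ) (δ : ℝ) (Z : Ω → Matrix (Fin N) (Fin n) ℝ),
        δ ∈ Set.Ioc (0:ℝ) 1 → 1 ≤ d → 1 ≤ m → m ≤ n →
        (m : ℝ) ≤ min (d : ℝ) (ρ ^ 2 * δ * n / 2) →
        (∀ i k, Measurable fun ω => Z ω i k) →
        ∀ ε : ℝ, 0 < ε →
        (μ {ω | ∃ x ∈ incompVecs n δ ρ,
            ‖mulVecE (Z ω) x‖ < ε * ρ * Real.sqrt (m / (2 * n))}).toReal ≤
          (c₂ * δ) ^ (-(m : ℤ)) *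
            ⨆ J : {J : Finset (Fin n) // J.card = m},
              (μ {ω | ∃ x ∈ spreadVecs n (J : Finset (Fin n)) m δ ρ,
                Metric.infDist (mulVecE (Z ω) x)
                  (Submodule.span ℝ
                    {v : EucSp N | ∃ k ∉ (J : Finset (Fin n)), v = fun i => Z ω i k} :
                      Set (EucSp N)) < ε}).toReal := by
  have hρ0 := hρ.1
  refine ⟨ρ ^ 2 / (2 * exp 1), by positivity, ?_⟩
  intro Ω _ μ _ N n d m δ Z hδ _ hm hmn hmρ _ ε hε
  have hq : 0 < ρ ^ 2 / (2 * exp 1) * δ := by have := hδ.1; positivity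
  have : Nonempty {J : Finset (Fin n) // J.card = m} := by
    obtain ⟨J, -, hJ⟩ := Finset.exists_subset_card_eq (s := (Finset.univ : Finset (Fin n)))
      (by simpa using hmn)
    exact ⟨⟨J, hJ⟩⟩
  rw [zpow_neg, zpow_natCast]
  refine toReal_measure_le_inv_mul_iSup μ _ _ (pow_pos hq m) ?_
  rintro ω ⟨x, hx, hZx⟩
  have hσ := le_card_spreadCoords hδ.1 hρ0.le hx
  have hmσ : m ≤ (spreadCoords n δ ρ x).card := by
    exact_mod_cast (hmρ.trans (min_le_right _ _)).trans hσ
  have hq_e : ρ ^ 2 / (2 * exp 1) * δ * exp 1 * n = ρ ^ 2 * δ * n / 2 := by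
    field_simp
  calc (ρ ^ 2 / (2 * exp 1) * δ) ^ m * (Fintype.card {J : Finset (Fin n) // J.card = m} : ℝ)
      = (ρ ^ 2 / (2 * exp 1) * δ) ^ m * (n.choose m : ℝ) := by simp
    _ ≤ ((spreadCoords n δ ρ x).card.choose m : ℝ) :=
        Nat.pow_mul_choose_le_choose hq.le hmσ (hq_e ▸ hσ)
    _ = ((Finset.powersetCard m (spreadCoords n δ ρ x)).card : ℝ) := by
        rw [Finset.card_powersetCard]
    _ ≤ _ := by
        refine Nat.cast_le.2 (Finset.card_le_card_of_surjOn Subtype.val fun J hJ => ?_)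
        obtain ⟨hJσ, hJ⟩ := Finset.mem_powersetCard.1 hJ
        exact ⟨⟨J, hJ⟩, Finset.mem_filter.2 ⟨Finset.mem_univ _,
          exists_mem_spreadVecs_infDist_lt hδ.1 hρ0 hε.le (Z ω) hJσ hJ hm hZx⟩, rfl⟩
end
end

section
/- For every δ, ρ ∈ (0,1), there exist c₁(δ,ρ) > 0 and c₂(δ) > 0 such that for every incompressible vector a ∈ Incomp_M(δ,ρ), every 0 < c < c₁(δ,ρ), and every α > 0, one has LCD_{α,c}(a) > c₂(δ)√M. -/
open MeasureTheory ProbabilityTheory Real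
open scoped ENNReal Classical

noncomputable section

/-- The integer lattice `ℤ^M` inside `ℝ^M`. -/
def intPoints (M : ℕ) : Set (EucSp M) := {y | ∀ i, ∃ z : ℤ, y i = (z : ℝ)}

/-- The least common denominator of a vector `a ∈ ℝ^M`. -/
def LCD {M : ℕ} (α γ : ℝ) (a : EucSp M) : ℝ :=
  sInf {θ : ℝ | 0 < θ ∧ Metric.infDist (θ • a) (intPoints M) < min (γ * ‖θ • a‖) α}

/-!
Let `B` be the set of coordinates with `δ M aᵢ² > 1`. Since `‖a‖ = 1` there are at most `δ M` of
them, so `a` restricted to `B` is sparse and incompressibility makes the rest of `a` have norm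
`> ρ`. If `θ < √(δ M) / 2`, every coordinate `θ aᵢ` with `i ∉ B` lies in `[-1/2, 1/2]`, where `0`
is a nearest integer; hence `dist(θ a, ℤ^M) ≥ θ ρ ≥ c θ` for `c ≤ ρ`, and `θ` is not admissible in
the definition of the LCD. The admissible set is nonempty (otherwise `sInf` would return the junk
value `0`): by compactness of the cube, two of the fractional-part vectors `{n a}` are arbitrarily
close, and the difference of their indices is an admissible `θ`.
-/

open Finset

section

variable {M : ℕ}

lemma EuclideanSpace.norm_le_norm_of_abs_le {ι : Type*} [Fintype ι]
    {x y : EuclideanSpace ℝ ι} (h : ∀ i, |x i| ≤ |y i|) : ‖x‖ ≤ ‖y‖ := by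
  refine le_of_sq_le_sq ?_ (norm_nonneg y)
  simp only [EuclideanSpace.real_norm_sq_eq]
  exact sum_le_sum fun i _ => sq_le_sq.2 (h i)

lemma card_filter_one_lt_mul_sq_le {ι : Type*} [Fintype ι] (x : EuclideanSpace ℝ ι) {t : ℝ}
    (ht : 0 ≤ t) : (#{i | 1 < t * x i ^ 2} : ℝ) ≤ t * ‖x‖ ^ 2 := by
  rw [EuclideanSpace.real_norm_sq_eq, mul_sum, card_eq_sum_ones, Nat.cast_sum, Nat.cast_one,
    sum_filter]
  exact sum_le_sum fun i _ => by split_ifs with h <;> [exact h.le; positivity]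

lemma mem_sparseVecs_of_eq_zero_of_notMem {δ : ℝ} {y : EucSp M} {s : Finset (Fin M)}
    (hy : ∀ i ∉ s, y i = 0) (hs : (#s : ℝ) ≤ δ * M) : y ∈ sparseVecs M δ := by
  refine le_trans ?_ hs
  rw [Nat.card_eq_fintype_card, Fintype.card_subtype]
  exact_mod_cast card_le_card fun i hi => by
    by_contra his
    simp [hy i his] at hi

lemma abs_le_abs_sub_intCast {x : ℝ} (hx : |x| ≤ 1 / 2) (z : ℤ) : |x| ≤ |x - z| := by
  rcases eq_or_ne z 0 with rfl | hz
  · simp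
  · have : (1 : ℝ) ≤ |(z : ℝ)| := by exact_mod_cast Int.one_le_abs hz
    linarith [abs_sub_abs_le_abs_sub (z : ℝ) x, abs_sub_comm (z : ℝ) x]

lemma exists_nat_infDist_intPoints_lt (a : EucSp M) {ε : ℝ} (hε : 0 < ε) :
    ∃ k : ℕ, 0 < k ∧ Metric.infDist ((k : ℝ) • a) (intPoints M) < ε := by
  set u : ℕ → EucSp M := fun n => WithLp.toLp 2 fun i => Int.fract (n * a i)
  have hK : IsCompact (WithLp.toLp 2 '' Set.univ.pi fun _ : Fin M => Set.Icc (0 : ℝ) 1) :=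
    (isCompact_univ_pi fun _ => isCompact_Icc).image (PiLp.continuous_toLp 2 _)
  obtain ⟨_, -, φ, hφ, hlim⟩ := hK.isSeqCompact (x := u) fun n =>
    ⟨_, fun i _ => ⟨Int.fract_nonneg _, (Int.fract_lt_one _).le⟩, rfl⟩
  obtain ⟨N, hN⟩ := Metric.cauchySeq_iff'.1 (Filter.Tendsto.cauchySeq hlim) ε hε
  have hφN : φ N < φ (N + 1) := hφ N.lt_succ_self
  refine ⟨φ (N + 1) - φ N, by omega, ?_⟩
  set z : EucSp M := WithLp.toLp 2 fun i => ((⌊φ (N + 1) * a i⌋ - ⌊φ N * a i⌋ : ℤ) : ℝ)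
  have hz : ((φ (N + 1) - φ N : ℕ) : ℝ) • a - z = u (φ (N + 1)) - u (φ N) := by
    ext i
    simp only [PiLp.sub_apply, PiLp.smul_apply, smul_eq_mul, u, z, Int.fract]
    push_cast [hφN.le]
    ring
  calc Metric.infDist _ (intPoints M) ≤ dist _ z :=
        Metric.infDist_le_dist_of_mem fun i => ⟨_, rfl⟩
    _ = dist (u (φ (N + 1))) (u (φ N)) := by rw [dist_eq_norm, hz, dist_eq_norm]
    _ < ε := hN _ N.le_succ

lemma mul_le_infDist_intPoints_of_incomp {δ ρ θ : ℝ} {a : EucSp M} (ha : a ∈ incompVecs M δ ρ)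
    (hθ : 0 ≤ θ) (hθδ : 4 * θ ^ 2 < δ * M) :
    θ * ρ ≤ Metric.infDist (θ • a) (intPoints M) := by
  have hδM : 0 ≤ δ * M := (by positivity : (0 : ℝ) ≤ 4 * θ ^ 2).trans hθδ.le
  set B : Finset (Fin M) := {i | 1 < δ * M * a i ^ 2}
  set y : EucSp M := WithLp.toLp 2 fun i => if i ∈ B then a i else 0
  have hy : y ∈ sparseVecs M δ := by
    refine mem_sparseVecs_of_eq_zero_of_notMem (s := B) (fun i hi => if_neg hi) ?_
    simpa [ha.1] using card_filter_one_lt_mul_sq_le a hδM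
  have hρ : ρ < ‖a - y‖ := by
    rw [← dist_eq_norm]
    exact ha.2.trans_le (Metric.infDist_le_dist_of_mem hy)
  have hlattice : ∀ z ∈ intPoints M, θ * ‖a - y‖ ≤ dist (θ • a) z := by
    intro z hz
    have hcoord : ∀ i, |(θ • (a - y)) i| ≤ |(θ • a - z) i| := by
      intro i
      obtain ⟨n, hn⟩ := hz i
      by_cases hi : i ∈ B
      · simp [y, hi]
      · have hiB : ¬ 1 < δ * M * a i ^ 2 := by simpa [B] using hi
        have hsmall : |θ * a i| ≤ 1 / 2 := abs_le_of_sq_le_sq (by nlinarith) (by norm_num)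
        simpa [y, hi, hn] using abs_le_abs_sub_intCast hsmall n
    calc θ * ‖a - y‖ = ‖θ • (a - y)‖ := by rw [norm_smul, Real.norm_of_nonneg hθ]
      _ ≤ ‖θ • a - z‖ := EuclideanSpace.norm_le_norm_of_abs_le hcoord
      _ = dist (θ • a) z := (dist_eq_norm _ _).symm
  refine (Metric.le_infDist ⟨0, fun i => ⟨0, by simp⟩⟩).2 fun z hz => ?_
  exact (mul_le_mul_of_nonneg_left hρ.le hθ).trans (hlattice z hz)

lemma exists_pos_infDist_intPoints_lt_min {γ α : ℝ} {a : EucSp M} (ha : a ≠ 0) (hγ : 0 < γ)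
    (hα : 0 < α) :
    ∃ θ : ℝ, 0 < θ ∧ Metric.infDist (θ • a) (intPoints M) < min (γ * ‖θ • a‖) α := by
  obtain ⟨k, hk, hdist⟩ :=
    exists_nat_infDist_intPoints_lt a (ε := min (γ * ‖a‖) α) (by positivity)
  refine ⟨k, by positivity, hdist.trans_le (min_le_min_right _ ?_)⟩
  rw [norm_smul, Real.norm_natCast]
  have : (1 : ℝ) ≤ k := by exact_mod_cast hk
  gcongr
  exact le_mul_of_one_le_left (norm_nonneg a) this

lemma ne_zero_of_mem_incompVecs {δ ρ : ℝ} {a : EucSp M} (ha : a ∈ incompVecs M δ ρ) :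
    a ≠ 0 := by
  rintro rfl
  simpa using ha.1

lemma sqrt_mul_div_two_le_LCD {δ ρ c α : ℝ} {a : EucSp M} (ha : a ∈ incompVecs M δ ρ)
    (hc : 0 < c) (hcρ : c ≤ ρ) (hα : 0 < α) : √(δ * M) / 2 ≤ LCD α c a := by
  refine le_csInf (exists_pos_infDist_intPoints_lt_min (ne_zero_of_mem_incompVecs ha) hc hα) ?_
  rintro θ ⟨hθ, hdist⟩
  by_contra! hlt
  have h4 : 4 * θ ^ 2 < δ * M := by
    have := (Real.lt_sqrt (by positivity : (0 : ℝ) ≤ 2 * θ)).1 (by linarith)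
    linarith
  have := mul_le_infDist_intPoints_of_incomp ha hθ.le h4
  rw [norm_smul, ha.1, mul_one, Real.norm_of_nonneg hθ.le] at hdist
  nlinarith [min_le_left (c * θ) α]

end

/-- Incompressible vectors have least common denominator of order at least `√M`. -/
theorem stmt11 (δ ρ : ℝ) (hδ : δ ∈ Set.Ioo (0:ℝ) 1) (hρ : ρ ∈ Set.Ioo (0:ℝ) 1) :
    ∃ c₁ c₂ : ℝ, 0 < c₁ ∧ 0 < c₂ ∧
      ∀ (M : ℕ) (a : EucSp M), a ∈ incompVecs M δ ρ →
        ∀ c α : ℝ, 0 < c → c < c₁ → 0 < α →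
          c₂ * Real.sqrt M < LCD α c a := by
  have hsqrtδ : 0 < √δ := Real.sqrt_pos.2 hδ.1
  refine ⟨ρ, √δ / 4, hρ.1, by positivity, fun M a ha c α hc hcρ hα => ?_⟩
  have hM : 0 < M := Nat.pos_of_ne_zero <| by
    rintro rfl
    exact ne_zero_of_mem_incompVecs ha (Subsingleton.elim _ _)
  calc √δ / 4 * √M < √δ * √M / 2 := by
        have : 0 < √δ * √M := by positivity
        linarith
    _ = √(δ * M) / 2 := by rw [Real.sqrt_mul hδ.1.le]
    _ ≤ LCD α c a := sqrt_mul_div_two_le_LCD ha hc hcρ.le hα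
end
end

section
/- Fix constants δ, ρ ∈ (0,1), and assume the setting of the structure theorem: Ỹ^T − B̃ is an (N−l)×M random matrix with ‖Ỹ^T − B̃‖ ≤ C₁√N, l ≤ βN, satisfying the single-vector small ball bound P(‖(Ỹ^T − B̃)x‖_2 < t√N) ≤ (Ct + C/D + Ce^{−cα²})^{N−l} for each x in the level set S_D, and assume the level set S_D admits a (4α/D)-net of cardinality at most (CD/√N)^N. Then there exist c₃, c₄, μ ∈ (0,1) such that if α = μ√N ≥ 1 and D ≤ c₃√N·e^{c₃N/l}, then P( inf_{x ∈ S_D} ‖(Ỹ^T − B̃)x‖_2 < c₄N/D ) ≤ e^{−N}. -/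
open MeasureTheory ProbabilityTheory Real Matrix
open scoped ENNReal Classical

noncomputable section

/-- The level set `S_D` of incompressible unit vectors with LCD of order `D`,
intersected with the subspace `P^T ℝ^N`. -/
def levelSet (M N : ℕ) (P : Matrix (Fin N) (Fin M) ℝ) (α c δ ρ D : ℝ) : Set (EucSp M) :=
  {x | x ∈ incompVecs M δ ρ ∧ D ≤ LCD α c x ∧ LCD α c x < 2 * D ∧
    ∃ v : EucSp N, x = mulVecE Pᵀ v}


open Filter Topology

/-! If `‖Z x‖ < c₄ N / D` for some `x ∈ S_D`, then a net point `y` with `‖x - y‖ ≤ 4α/D` has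
`‖Z y‖ < c₄ N / D + C₁ √N · 4α/D = t √N`, where `t = (c₄ + 4 C₁ μ₀) √N / D`. A union bound over the
net costs the factor `(CC D/√N)^N` against the small ball bound `(CC t + CC/D + CC e^{-cc α²})^{N-l}`.
Splitting the `(N-l)`-th power, the part coming from `t` and `1/D` is `CC^N γ^{N-l} (D/√N)^l`,
which `D ≤ c₃ √N e^{c₃ N/l}` turns into `(CC γ^{1-β} e^{c₃})^N`, and `γ` is chosen small in terms
of `β`. In the part coming from `e^{-cc α²} = e^{-cc μ₀² N}`, the decay `e^{-cc μ₀² N (N-l)}`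
beats the growth `e^{c₃ N²/l}` of `(D/√N)^N` because `c₃ ≤ cc μ₀² (1-β)`. -/

theorem mulVecE_eq_toEuclideanLin {m n : ℕ} (A : Matrix (Fin m) (Fin n) ℝ) (v : EucSp n) :
    mulVecE A v = Matrix.toEuclideanLin A v :=
  rfl

theorem opNormM_eq_norm {m n : ℕ} (A : Matrix (Fin m) (Fin n) ℝ) :
    opNormM A = ‖LinearMap.toContinuousLinearMap (Matrix.toEuclideanLin A)‖ := by
  rw [← ContinuousLinearMap.sSup_sphere_eq_norm, sSup_image']
  rfl

theorem norm_mulVecE_le {m n : ℕ} (A : Matrix (Fin m) (Fin n) ℝ) (v : EucSp n) :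
    ‖mulVecE A v‖ ≤ opNormM A * ‖v‖ :=
  opNormM_eq_norm A ▸ (LinearMap.toContinuousLinearMap (Matrix.toEuclideanLin A)).le_opNorm v

theorem norm_mulVecE_le_of_dist_le {m n : ℕ} {A : Matrix (Fin m) (Fin n) ℝ} {K r : ℝ}
    {x y : EucSp n} (hA : opNormM A ≤ K) (hxy : dist x y ≤ r) :
    ‖mulVecE A y‖ ≤ ‖mulVecE A x‖ + K * r := by
  have hK : 0 ≤ K := (Real.iSup_nonneg fun _ ↦ norm_nonneg _).trans hA
  have hyx : ‖y - x‖ ≤ r := by rwa [← dist_eq_norm, dist_comm]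
  calc ‖mulVecE A y‖ = ‖mulVecE A x + mulVecE A (y - x)‖ := by
        simp only [mulVecE_eq_toEuclideanLin, map_sub, add_sub_cancel]
    _ ≤ ‖mulVecE A x‖ + opNormM A * ‖y - x‖ :=
        (norm_add_le _ _).trans (add_le_add_right (norm_mulVecE_le A _) _)
    _ ≤ ‖mulVecE A x‖ + K * r := by gcongr

theorem measureReal_le_card_mul_of_subset_biUnion {Ω X : Type*} [MeasurableSpace Ω]
    (μ : Measure Ω) [IsFiniteMeasure μ] {E : Set Ω} (𝒩 : Finset X) (F : X → Set Ω) {p : ℝ}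
    (hE : E ⊆ ⋃ y ∈ 𝒩, F y) (hF : ∀ y ∈ 𝒩, μ.real (F y) ≤ p) :
    μ.real E ≤ 𝒩.card * p :=
  calc μ.real E ≤ μ.real (⋃ y ∈ 𝒩, F y) := measureReal_mono hE (measure_ne_top μ _)
    _ ≤ ∑ y ∈ 𝒩, μ.real (F y) := measureReal_biUnion_finset_le 𝒩 F
    _ ≤ 𝒩.card * p := by simpa using Finset.sum_le_card_nsmul 𝒩 _ p hF

theorem measureReal_exists_norm_mulVecE_lt_le {Ω : Type*} [MeasurableSpace Ω] (μ : Measure Ω)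
    [IsFiniteMeasure μ] {m n : ℕ} (Z : Ω → Matrix (Fin m) (Fin n) ℝ) {S : Set (EucSp n)}
    (𝒩 : Finset (EucSp n)) {K r σ τ p : ℝ} (hZ : ∀ ω, opNormM (Z ω) ≤ K)
    (hsub : ↑𝒩 ⊆ S) (hcov : ∀ x ∈ S, ∃ y ∈ 𝒩, dist x y ≤ r) (hστ : σ + K * r ≤ τ)
    (hball : ∀ y ∈ S, μ.real {ω | ‖mulVecE (Z ω) y‖ < τ} ≤ p) :
    μ.real {ω | ∃ x ∈ S, ‖mulVecE (Z ω) x‖ < σ} ≤ 𝒩.card * p := by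
  refine measureReal_le_card_mul_of_subset_biUnion μ 𝒩 _ ?_ fun y hy ↦ hball y (hsub hy)
  rintro ω ⟨x, hx, hxσ⟩
  obtain ⟨y, hy, hxy⟩ := hcov x hx
  refine Set.mem_biUnion hy (show ‖mulVecE (Z ω) y‖ < τ from ?_)
  linarith [norm_mulVecE_le_of_dist_le (hZ ω) hxy]

theorem pow_le_rpow_pow {x a : ℝ} {k N : ℕ} (hx0 : 0 < x) (hx1 : x ≤ 1) (hk : a * N ≤ k) :
    x ^ k ≤ (x ^ a) ^ N := by
  rw [← Real.rpow_natCast, ← Real.rpow_natCast, ← Real.rpow_mul hx0.le]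
  exact Real.rpow_le_rpow_of_exponent_ge hx0 hx1 hk

theorem add_pow_le_two_mul_pow_add {x y : ℝ} (hx : 0 ≤ x) (hy : 0 ≤ y) (k : ℕ) :
    (x + y) ^ k ≤ (2 * x) ^ k + (2 * y) ^ k := by
  rw [mul_pow, mul_pow, ← mul_add]
  exact (add_pow_le hx hy k).trans <| mul_le_mul_of_nonneg_right
    (pow_le_pow_right₀ one_le_two (Nat.sub_le k 1)) (by positivity)

theorem exp_neg_two_pow_add_self_le {N : ℕ} (hN : 1 ≤ N) :
    exp (-2) ^ N + exp (-2) ^ N ≤ exp (-N) := by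
  have h2 : 2 * exp (-1) ≤ 1 := by
    rw [exp_neg, ← div_eq_mul_inv, div_le_one (exp_pos 1)]
    linarith [add_one_le_exp 1]
  have hN1 : exp (-N) ≤ exp (-1) := exp_le_exp.2 (by simpa using hN)
  have hsq : exp (-2) ^ N = exp (-N) * exp (-N) := by
    rw [← exp_add, ← exp_nat_mul]; ring_nf
  nlinarith [exp_pos (-N)]

theorem one_sub_mul_le_cast_sub {β : ℝ} {N l : ℕ} (hlN : l ≤ N) (hβ : (l : ℝ) ≤ β * N) :
    (1 - β) * N ≤ ((N - l : ℕ) : ℝ) := by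
  rw [Nat.cast_sub hlN]
  linarith

theorem mul_pow_mul_div_pow_le {CC γ β c₃ u : ℝ} {N l : ℕ} (hCC : 0 ≤ CC) (hγ0 : 0 < γ)
    (hγ1 : γ ≤ 1) (hγ : CC * γ ^ (1 - β) ≤ exp (-3)) (hc₃0 : 0 ≤ c₃) (hc₃1 : c₃ ≤ 1)
    (hl : 0 < l) (hlN : l ≤ N) (hβ : (l : ℝ) ≤ β * N) (hu0 : 0 < u)
    (hu : u ≤ c₃ * exp (c₃ * N / l)) :
    (CC * u) ^ N * (γ / u) ^ (N - l) ≤ exp (-2) ^ N := by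
  have hul : u ^ l ≤ exp c₃ ^ N := calc
    u ^ l ≤ (c₃ * exp (c₃ * N / l)) ^ l := by gcongr
    _ = c₃ ^ l * exp (c₃ * N) := by
        rw [mul_pow, ← exp_nat_mul]
        field_simp
    _ ≤ exp (c₃ * N) := mul_le_of_le_one_left (exp_pos _).le (pow_le_one₀ hc₃0 hc₃1)
    _ = exp c₃ ^ N := by rw [← exp_nat_mul, mul_comm]
  have hγk : γ ^ (N - l) ≤ (γ ^ (1 - β)) ^ N :=
    pow_le_rpow_pow hγ0 hγ1 (one_sub_mul_le_cast_sub hlN hβ)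
  have hsplit : (CC * u) ^ N * (γ / u) ^ (N - l) = CC ^ N * γ ^ (N - l) * u ^ l := by
    obtain ⟨k, rfl⟩ := Nat.exists_eq_add_of_le' hlN
    rw [Nat.add_sub_cancel, mul_pow, div_pow, pow_add CC, pow_add u]
    field_simp
  calc (CC * u) ^ N * (γ / u) ^ (N - l) = CC ^ N * γ ^ (N - l) * u ^ l := hsplit
    _ ≤ CC ^ N * (γ ^ (1 - β)) ^ N * exp c₃ ^ N := by gcongr
    _ = (CC * γ ^ (1 - β) * exp c₃) ^ N := by ring
    _ ≤ (exp (-3) * exp 1) ^ N := by gcongr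
    _ = exp (-2) ^ N := by rw [← exp_add]; norm_num

theorem mul_pow_mul_exp_pow_le {CC cc μ₀ β c₃ u : ℝ} {N l : ℕ} (hCC : 0 ≤ CC) (hcc : 0 ≤ cc)
    (hc₃0 : 0 ≤ c₃) (hc₃cc : c₃ ≤ cc * μ₀ ^ 2 * (1 - β))
    (hc₃CC : c₃ * (CC * max (2 * CC) 1) ≤ exp (-2)) (hl : 0 < l) (hlN : l ≤ N)
    (hβ : (l : ℝ) ≤ β * N) (hu0 : 0 ≤ u) (hu : u ≤ c₃ * exp (c₃ * N / l)) :
    (CC * u) ^ N * (2 * CC * exp (-(cc * μ₀ ^ 2 * N))) ^ (N - l) ≤ exp (-2) ^ N := by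
  have hN : (0 : ℝ) ≤ N := N.cast_nonneg
  have hu' : u ≤ c₃ * exp (c₃ * N) :=
    hu.trans (by gcongr; exact div_le_self (by positivity) (by exact_mod_cast hl))
  have h2CC : (2 * CC) ^ (N - l) ≤ max (2 * CC) 1 ^ N :=
    (pow_le_pow_left₀ (by positivity) (le_max_left _ _) _).trans
      (pow_le_pow_right₀ (le_max_right _ _) (Nat.sub_le N l))
  have hexp : exp (-(cc * μ₀ ^ 2 * N)) ^ (N - l) ≤ exp (-(c₃ * N)) ^ N := by
    rw [← exp_nat_mul, ← exp_nat_mul, exp_le_exp]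
    have hNl := one_sub_mul_le_cast_sub hlN hβ
    have hc₃N : c₃ * N ≤ cc * μ₀ ^ 2 * ((N - l : ℕ) : ℝ) :=
      calc c₃ * N ≤ cc * μ₀ ^ 2 * (1 - β) * N := by gcongr
        _ ≤ cc * μ₀ ^ 2 * ((N - l : ℕ) : ℝ) := by rw [mul_assoc]; gcongr
    linarith [mul_le_mul_of_nonneg_left hc₃N hN]
  calc (CC * u) ^ N * (2 * CC * exp (-(cc * μ₀ ^ 2 * N))) ^ (N - l)
      = (CC * u) ^ N * (2 * CC) ^ (N - l) * exp (-(cc * μ₀ ^ 2 * N)) ^ (N - l) := by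
        rw [mul_pow (2 * CC)]
        ring
    _ ≤ (CC * (c₃ * exp (c₃ * N))) ^ N * max (2 * CC) 1 ^ N * exp (-(c₃ * N)) ^ N := by
        gcongr
    _ = (c₃ * (CC * max (2 * CC) 1) * (exp (c₃ * N) * exp (-(c₃ * N)))) ^ N := by ring
    _ ≤ exp (-2) ^ N := by
        rw [← exp_add, add_neg_cancel, exp_zero, mul_one]
        gcongr

theorem netCard_mul_smallBall_le {CC cc C₁ β γ c₃ c₄ μ₀ D : ℝ} {N l : ℕ} (hCC : 0 < CC)
    (hcc : 0 ≤ cc) (hC₁ : 0 ≤ C₁) (hc₄ : 0 ≤ c₄) (hγ0 : 0 < γ) (hγ1 : γ ≤ 1)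
    (hγ : CC * γ ^ (1 - β) ≤ exp (-3)) (hγμ : 2 * CC * (c₄ + (4 * C₁ + 1) * μ₀) ≤ γ)
    (hc₃0 : 0 ≤ c₃) (hc₃1 : c₃ ≤ 1) (hc₃cc : c₃ ≤ cc * μ₀ ^ 2 * (1 - β))
    (hc₃CC : c₃ * (CC * max (2 * CC) 1) ≤ exp (-2)) (hl : 0 < l) (hlN : l ≤ N)
    (hβ : (l : ℝ) ≤ β * N) (hD : 0 < D) (hDle : D ≤ c₃ * √N * exp (c₃ * N / l))
    (hα : 1 ≤ μ₀ * √N) :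
    (CC * D / √N) ^ N * (CC * ((c₄ + 4 * C₁ * μ₀) * √N / D) + CC / D +
      CC * exp (-cc * (μ₀ * √N) ^ 2)) ^ (N - l) ≤ exp (-N) := by
  have hs : 0 < √N := sqrt_pos.2 (by exact_mod_cast hl.trans_le hlN)
  have hμ₀ : 0 < μ₀ := pos_of_mul_pos_left (one_pos.trans_le hα) hs.le
  set u := D / √N with hu_def
  have hu0 : 0 < u := div_pos hD hs
  have hu : u ≤ c₃ * exp (c₃ * N / l) := by
    rw [div_le_iff₀ hs]
    linarith
  set x := CC * (c₄ + (4 * C₁ + 1) * μ₀) / u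
  set y := CC * exp (-(cc * μ₀ ^ 2 * N))
  have hxy : CC * ((c₄ + 4 * C₁ * μ₀) * √N / D) + CC / D + CC * exp (-cc * (μ₀ * √N) ^ 2)
      ≤ x + y := by
    have hy : CC * exp (-cc * (μ₀ * √N) ^ 2) = y := by
      rw [mul_pow, sq_sqrt N.cast_nonneg, neg_mul, ← mul_assoc]
    have hx : x = CC * ((c₄ + 4 * C₁ * μ₀) * √N / D) + CC * μ₀ * √N / D := by
      simp only [x, hu_def]
      field_simp
      ring
    have hCD : CC / D ≤ CC * μ₀ * √N / D := by
      rw [mul_assoc]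
      gcongr
      exact le_mul_of_one_le_right hCC.le hα
    linarith
  calc (CC * D / √N) ^ N * (CC * ((c₄ + 4 * C₁ * μ₀) * √N / D) + CC / D +
        CC * exp (-cc * (μ₀ * √N) ^ 2)) ^ (N - l)
      ≤ (CC * u) ^ N * ((2 * x) ^ (N - l) + (2 * y) ^ (N - l)) := by
        rw [mul_div_assoc]
        gcongr
        exact (pow_le_pow_left₀ (by positivity) hxy _).trans
          (add_pow_le_two_mul_pow_add (by positivity) (by positivity) _)
    _ ≤ (CC * u) ^ N * (γ / u) ^ (N - l) +
        (CC * u) ^ N * (2 * CC * exp (-(cc * μ₀ ^ 2 * N))) ^ (N - l) := by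
        rw [mul_add, show 2 * y = 2 * CC * exp (-(cc * μ₀ ^ 2 * N)) by ring]
        gcongr
        rw [← mul_div_assoc]
        exact div_le_div_of_nonneg_right (by linarith) hu0.le
    _ ≤ exp (-2) ^ N + exp (-2) ^ N := by
        gcongr
        · exact mul_pow_mul_div_pow_le hCC.le hγ0 hγ1 hγ hc₃0 hc₃1 hl hlN hβ hu0 hu
        · exact mul_pow_mul_exp_pow_le hCC.le hcc hc₃0 hc₃cc hc₃CC hl hlN hβ hu0.le hu
    _ ≤ exp (-N) := exp_neg_two_pow_add_self_le (hl.trans_le hlN)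

theorem exists_mem_Ioo_of_eventually_nhds_zero {p : ℝ → Prop} (h : ∀ᶠ x in 𝓝 0, p x) :
    ∃ x ∈ Set.Ioo (0 : ℝ) 1, p x := by
  obtain ⟨x, ⟨hx, hx1⟩, hx0⟩ := (((h.and (eventually_lt_nhds one_pos)).filter_mono
    nhdsWithin_le_nhds).and (self_mem_nhdsWithin (s := Set.Ioi 0))).exists
  exact ⟨x, ⟨hx0, hx1⟩, hx⟩

theorem exists_small_constants (CC cc C₁ β : ℝ) (hcc : 0 < cc) (hβ : β < 1) :
    ∃ γ ∈ Set.Ioo (0 : ℝ) 1, ∃ μ₀ ∈ Set.Ioo (0 : ℝ) 1, ∃ c₃ ∈ Set.Ioo (0 : ℝ) 1,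
      CC * γ ^ (1 - β) < exp (-3) ∧ 2 * CC * (μ₀ + (4 * C₁ + 1) * μ₀) < γ ∧
      c₃ < cc * μ₀ ^ 2 * (1 - β) ∧ c₃ * (CC * max (2 * CC) 1) < exp (-2) := by
  obtain ⟨γ, hγ, hγβ⟩ := exists_mem_Ioo_of_eventually_nhds_zero (p := fun γ ↦
      CC * γ ^ (1 - β) < exp (-3)) <|
    ContinuousAt.eventually_lt (by fun_prop (disch := linarith)) continuousAt_const
      (by rw [zero_rpow (by linarith), mul_zero]; exact exp_pos _)
  obtain ⟨μ₀, hμ₀, hμ₀γ⟩ := exists_mem_Ioo_of_eventually_nhds_zero (p := fun μ₀ ↦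
      2 * CC * (μ₀ + (4 * C₁ + 1) * μ₀) < γ) <|
    ContinuousAt.eventually_lt (by fun_prop) continuousAt_const (by simpa using hγ.1)
  obtain ⟨c₃, hc₃, hc₃μ₀, hc₃CC⟩ := exists_mem_Ioo_of_eventually_nhds_zero (p := fun c₃ ↦
      c₃ < cc * μ₀ ^ 2 * (1 - β) ∧ c₃ * (CC * max (2 * CC) 1) < exp (-2)) <|
    (eventually_lt_nhds (mul_pos (mul_pos hcc (pow_pos hμ₀.1 2)) (sub_pos.2 hβ))).and
      (ContinuousAt.eventually_lt (by fun_prop) continuousAt_const (by simpa using exp_pos _))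
  exact ⟨γ, hγ, μ₀, hμ₀, c₃, hc₃, hγβ, hμ₀γ, hc₃μ₀, hc₃CC⟩

/-- Uniform lower bound `≈ N/D` for `‖(Ỹ^T − B̃)x‖₂` over the level set `S_D`, given the
single-vector small ball bound and a small net for `S_D`. -/
theorem stmt17 (CC cc C₁ β : ℝ) (hCC : 0 < CC) (hcc : 0 < cc) (hC₁ : 0 < C₁)
    (hβ : β ∈ Set.Ioo (0:ℝ) 1) :
    ∃ c₃ c₄ μ₀ : ℝ, c₃ ∈ Set.Ioo (0:ℝ) 1 ∧ c₄ ∈ Set.Ioo (0:ℝ) 1 ∧ μ₀ ∈ Set.Ioo (0:ℝ) 1 ∧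
      ∀ (Ω : Type) (_ : MeasurableSpace Ω) (μ : Measure Ω), IsProbabilityMeasure μ →
      ∀ (N M l : ℕ) (P : Matrix (Fin N) (Fin M) ℝ) (δ ρ α c D : ℝ)
        (Z : Ω → Matrix (Fin (N - l)) (Fin M) ℝ),
        δ ∈ Set.Ioo (0:ℝ) 1 → ρ ∈ Set.Ioo (0:ℝ) 1 → c ∈ Set.Ioo (0:ℝ) 1 →
        1 ≤ l → (l : ℝ) ≤ β * N → 0 < D →
        (∀ ω, opNormM (Z ω) ≤ C₁ * Real.sqrt N) →
        (∀ x ∈ levelSet M N P α c δ ρ D, ∀ t : ℝ, 0 < t →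
          (μ {ω | ‖mulVecE (Z ω) x‖ < t * Real.sqrt N}).toReal ≤
            (CC * t + CC / D + CC * Real.exp (-cc * α ^ 2)) ^ (N - l)) →
        (∃ 𝒩 : Finset (EucSp M),
          (↑𝒩 : Set (EucSp M)) ⊆ levelSet M N P α c δ ρ D ∧
          (∀ x ∈ levelSet M N P α c δ ρ D, ∃ y ∈ 𝒩, dist x y ≤ 4 * α / D) ∧
          (𝒩.card : ℝ) ≤ (CC * D / Real.sqrt N) ^ N) →
        α = μ₀ * Real.sqrt N → 1 ≤ α →
        D ≤ c₃ * Real.sqrt N * Real.exp (c₃ * N / l) →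
        (μ {ω | ∃ x ∈ levelSet M N P α c δ ρ D,
            ‖mulVecE (Z ω) x‖ < c₄ * N / D}).toReal ≤ Real.exp (-(N : ℝ)) := by
  obtain ⟨γ, hγ, μ₀, hμ₀, c₃, hc₃, hγβ, hμ₀γ, hc₃μ₀, hc₃CC⟩ :=
    exists_small_constants CC cc C₁ β hcc hβ.2
  refine ⟨c₃, μ₀, μ₀, hc₃, hμ₀, hμ₀, ?_⟩
  rintro Ω _ μ _ N M l P δ ρ α c D Z - - - hl hlβ hD hZ hball ⟨𝒩, hsub, hcov, hcard⟩ rfl hα hDle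
  have hN : (0 : ℝ) < N := sqrt_pos.1 (pos_of_mul_pos_right (one_pos.trans_le hα) hμ₀.1.le)
  have hlN : l ≤ N := by exact_mod_cast hlβ.trans (mul_le_of_le_one_left hN.le hβ.2.le)
  have ht : 0 < (μ₀ + 4 * C₁ * μ₀) * √N / D := by
    have := hμ₀.1
    have := sqrt_pos.2 hN
    positivity
  set t := (μ₀ + 4 * C₁ * μ₀) * √N / D
  have hστ : μ₀ * N / D + C₁ * √N * (4 * (μ₀ * √N) / D) ≤ t * √N :=
    le_of_eq (by linear_combination (-μ₀ / D) * mul_self_sqrt hN.le)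
  calc μ.real {ω | ∃ x ∈ levelSet M N P (μ₀ * √N) c δ ρ D, ‖mulVecE (Z ω) x‖ < μ₀ * N / D}
      ≤ 𝒩.card * (CC * t + CC / D + CC * exp (-cc * (μ₀ * √N) ^ 2)) ^ (N - l) :=
        measureReal_exists_norm_mulVecE_lt_le μ Z 𝒩 hZ hsub hcov hστ
          fun y hy ↦ hball y hy t ht
    _ ≤ (CC * D / √N) ^ N * (CC * t + CC / D + CC * exp (-cc * (μ₀ * √N) ^ 2)) ^ (N - l) := by
        gcongr
    _ ≤ exp (-N) := netCard_mul_smallBall_le hCC hcc.le hC₁.le hμ₀.1.le hγ.1 hγ.2.le hγβ.le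
        hμ₀γ.le hc₃.1.le hc₃.2.le hc₃μ₀.le hc₃CC.le hl hlN hlβ hD hDle hα
end
end
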